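/- arXiv:1906.12205 — 2 statements merged into one kernel-verified Lean document; each statement's English description precedes it below -/
import Mathlib

section
/- For every smooth (or H^2) periodic function η on T^2 with zero mean, ‖Δ(η^2)‖_{L^2(T^2)} ≤ C ‖η‖_{L^∞(T^2)} ‖Δη‖_{L^2(T^2)} for some universal constant C. -/
open Real MeasureTheory

/-- The square `[0,2π]²` viewed as a fundamental domain of the torus. -/
noncomputable def torusSq : Set (ℝ × ℝ) := Set.Icc ((0:ℝ), (0:ℝ)) (2 * π, 2 * π)

/-- Laplacian of `η : ℝ × ℝ → ℝ`. -/
noncomputable def lap (η : ℝ × ℝ → ℝ) (p : ℝ × ℝ) : ℝ :=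
  fderiv ℝ (fun q => fderiv ℝ η q (1, 0)) p (1, 0) +
  fderiv ℝ (fun q => fderiv ℝ η q (0, 1)) p (0, 1)

noncomputable def d1 (f : ℝ × ℝ → ℝ) (p : ℝ × ℝ) : ℝ := fderiv ℝ f p (1, 0)
noncomputable def d2 (f : ℝ × ℝ → ℝ) (p : ℝ × ℝ) : ℝ := fderiv ℝ f p (0, 1)

lemma lap_eq (f : ℝ × ℝ → ℝ) (p : ℝ × ℝ) : lap f p = d1 (d1 f) p + d2 (d2 f) p := rfl

lemma contDiff_d1 {f : ℝ × ℝ → ℝ} (hf : ContDiff ℝ (⊤ : ℕ∞) f) : ContDiff ℝ (⊤ : ℕ∞) (d1 f) :=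
  (hf.fderiv_right (by simp)).clm_apply contDiff_const
lemma contDiff_d2 {f : ℝ × ℝ → ℝ} (hf : ContDiff ℝ (⊤ : ℕ∞) f) : ContDiff ℝ (⊤ : ℕ∞) (d2 f) :=
  (hf.fderiv_right (by simp)).clm_apply contDiff_const

lemma fderiv_shift {f : ℝ × ℝ → ℝ} (hf : ContDiff ℝ (⊤ : ℕ∞) f) (v : ℝ × ℝ)
    (hper : ∀ p, f (p + v) = f p) (p : ℝ × ℝ) :
    fderiv ℝ f (p + v) = fderiv ℝ f p := by
  have htr : HasFDerivAt (fun q : ℝ × ℝ => q + v) (ContinuousLinearMap.id ℝ (ℝ × ℝ)) p :=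
    (hasFDerivAt_id p).add_const v
  have hcomp : HasFDerivAt (fun q => f (q + v)) (fderiv ℝ f (p + v)) p := by
    simpa [Function.comp_def] using ((hf.differentiable (by simp) (p + v)).hasFDerivAt).comp p htr
  have : (fun q => f (q + v)) = f := by ext q; rw [hper]
  rw [this] at hcomp
  rw [hcomp.fderiv]

lemma d1_shift {f : ℝ × ℝ → ℝ} (hf : ContDiff ℝ (⊤ : ℕ∞) f) (v : ℝ × ℝ)
    (hper : ∀ p, f (p + v) = f p) (p : ℝ × ℝ) : d1 f (p + v) = d1 f p := by
  unfold d1; rw [fderiv_shift hf v hper]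

lemma d2_shift {f : ℝ × ℝ → ℝ} (hf : ContDiff ℝ (⊤ : ℕ∞) f) (v : ℝ × ℝ)
    (hper : ∀ p, f (p + v) = f p) (p : ℝ × ℝ) : d2 f (p + v) = d2 f p := by
  unfold d2; rw [fderiv_shift hf v hper]

lemma d1_mul {f g : ℝ × ℝ → ℝ} (hf : ContDiff ℝ (⊤ : ℕ∞) f) (hg : ContDiff ℝ (⊤ : ℕ∞) g) (p : ℝ × ℝ) :
    d1 (fun q => f q * g q) p = d1 f p * g p + f p * d1 g p := by
  unfold d1
  rw [fderiv_fun_mul (hf.differentiable (by simp) p) (hg.differentiable (by simp) p)]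
  simp; ring

lemma d2_mul {f g : ℝ × ℝ → ℝ} (hf : ContDiff ℝ (⊤ : ℕ∞) f) (hg : ContDiff ℝ (⊤ : ℕ∞) g) (p : ℝ × ℝ) :
    d2 (fun q => f q * g q) p = d2 f p * g p + f p * d2 g p := by
  unfold d2
  rw [fderiv_fun_mul (hf.differentiable (by simp) p) (hg.differentiable (by simp) p)]
  simp; ring

lemma d1_add {f g : ℝ × ℝ → ℝ} (hf : ContDiff ℝ (⊤ : ℕ∞) f) (hg : ContDiff ℝ (⊤ : ℕ∞) g) (p : ℝ × ℝ) :
    d1 (fun q => f q + g q) p = d1 f p + d1 g p := by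
  unfold d1
  rw [fderiv_fun_add (hf.differentiable (by simp) p) (hg.differentiable (by simp) p)]
  simp

lemma d2_add {f g : ℝ × ℝ → ℝ} (hf : ContDiff ℝ (⊤ : ℕ∞) f) (hg : ContDiff ℝ (⊤ : ℕ∞) g) (p : ℝ × ℝ) :
    d2 (fun q => f q + g q) p = d2 f p + d2 g p := by
  unfold d2
  rw [fderiv_fun_add (hf.differentiable (by simp) p) (hg.differentiable (by simp) p)]
  simp

/-- symmetry of second derivatives -/
lemma d1_d2_comm {f : ℝ × ℝ → ℝ} (hf : ContDiff ℝ (⊤ : ℕ∞) f) (p : ℝ × ℝ) :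
    d1 (d2 f) p = d2 (d1 f) p := by
  have hsymm : IsSymmSndFDerivAt ℝ f p := (hf.contDiffAt).isSymmSndFDerivAt
    (by rw [minSmoothness_of_isRCLikeNormedField]; exact WithTop.coe_le_coe.2 le_top)
  have h1 : d1 (d2 f) p = fderiv ℝ (fderiv ℝ f) p (1, 0) (0, 1) := by
    unfold d1 d2
    rw [fderiv_clm_apply ((hf.fderiv_right (m := (⊤ : ℕ∞)) (by simp)).differentiable (by simp) p)
      (differentiableAt_const _)]
    simp
  have h2 : d2 (d1 f) p = fderiv ℝ (fderiv ℝ f) p (0, 1) (1, 0) := by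
    unfold d1 d2
    rw [fderiv_clm_apply ((hf.fderiv_right (m := (⊤ : ℕ∞)) (by simp)).differentiable (by simp) p)
      (differentiableAt_const _)]
    simp
  rw [h1, h2, hsymm]

lemma torusSq_eq : torusSq = Set.Icc (0:ℝ) (2*π) ×ˢ Set.Icc (0:ℝ) (2*π) := by
  rw [torusSq, ← Set.Icc_prod_Icc]

lemma hasDerivAt_d1 {f : ℝ × ℝ → ℝ} (hf : ContDiff ℝ (⊤ : ℕ∞) f) (x y : ℝ) :
    HasDerivAt (fun t => f (t, y)) (d1 f (x, y)) x := by
  have hγ : HasDerivAt (fun t : ℝ => (t, y)) ((1:ℝ), (0:ℝ)) x :=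
    (hasDerivAt_id x).prodMk (hasDerivAt_const x y)
  exact ((hf.differentiable (by simp) (x, y)).hasFDerivAt).comp_hasDerivAt x hγ

lemma hasDerivAt_d2 {f : ℝ × ℝ → ℝ} (hf : ContDiff ℝ (⊤ : ℕ∞) f) (x y : ℝ) :
    HasDerivAt (fun t => f (x, t)) (d2 f (x, y)) y := by
  have hγ : HasDerivAt (fun t : ℝ => (x, t)) ((0:ℝ), (1:ℝ)) y :=
    (hasDerivAt_const y x).prodMk (hasDerivAt_id y)
  exact ((hf.differentiable (by simp) (x, y)).hasFDerivAt).comp_hasDerivAt y hγ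

lemma integrableOn_torusSq {f : ℝ × ℝ → ℝ} (hf : Continuous f) :
    IntegrableOn f torusSq :=
  hf.continuousOn.integrableOn_compact isCompact_Icc

lemma inner_d1 {f : ℝ × ℝ → ℝ} (hf : ContDiff ℝ (⊤ : ℕ∞) f)
    (hper : ∀ p : ℝ × ℝ, f (p + (2*π, 0)) = f p) (y : ℝ) :
    ∫ x in Set.Icc (0:ℝ) (2*π), d1 f (x, y) = 0 := by
  rw [MeasureTheory.integral_Icc_eq_integral_Ioc,
    ← intervalIntegral.integral_of_le (by positivity : (0:ℝ) ≤ 2*π)]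
  rw [intervalIntegral.integral_eq_sub_of_hasDerivAt
    (f := fun t => f (t, y)) (fun x _ => hasDerivAt_d1 hf x y)
    (((contDiff_d1 hf).continuous.comp (by continuity)).intervalIntegrable 0 (2*π))]
  have := hper (0, y)
  simp only [Prod.mk_add_mk, zero_add, add_zero] at this
  simp [this]

lemma inner_d2 {f : ℝ × ℝ → ℝ} (hf : ContDiff ℝ (⊤ : ℕ∞) f)
    (hper : ∀ p : ℝ × ℝ, f (p + (0, 2*π)) = f p) (x : ℝ) :
    ∫ y in Set.Icc (0:ℝ) (2*π), d2 f (x, y) = 0 := by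
  rw [MeasureTheory.integral_Icc_eq_integral_Ioc,
    ← intervalIntegral.integral_of_le (by positivity : (0:ℝ) ≤ 2*π)]
  rw [intervalIntegral.integral_eq_sub_of_hasDerivAt
    (f := fun t => f (x, t)) (fun y _ => hasDerivAt_d2 hf x y)
    (((contDiff_d2 hf).continuous.comp (by continuity)).intervalIntegrable 0 (2*π))]
  have := hper (x, 0)
  simp only [Prod.mk_add_mk, zero_add, add_zero] at this
  simp [this]

lemma integral_d1_eq_zero {f : ℝ × ℝ → ℝ} (hf : ContDiff ℝ (⊤ : ℕ∞) f)
    (hper : ∀ p : ℝ × ℝ, f (p + (2*π, 0)) = f p) :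
    ∫ p in torusSq, d1 f p = 0 := by
  have hint : IntegrableOn (d1 f) torusSq := integrableOn_torusSq (contDiff_d1 hf).continuous
  rw [torusSq_eq, Measure.volume_eq_prod] at hint ⊢
  rw [MeasureTheory.setIntegral_prod _ hint]
  have hint2 : Integrable (Function.uncurry fun x y => d1 f (x, y))
      ((volume.restrict (Set.Icc (0:ℝ) (2*π))).prod (volume.restrict (Set.Icc (0:ℝ) (2*π)))) := by
    rw [Measure.prod_restrict]
    exact hint
  rw [MeasureTheory.integral_integral_swap hint2]
  calc ∫ y in Set.Icc (0:ℝ) (2*π), ∫ x in Set.Icc (0:ℝ) (2*π), d1 f (x, y)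
      = ∫ y in Set.Icc (0:ℝ) (2*π), (0:ℝ) := by
        apply MeasureTheory.setIntegral_congr_fun measurableSet_Icc
        intro y _
        exact inner_d1 hf hper y
    _ = 0 := by simp

lemma integral_d2_eq_zero {f : ℝ × ℝ → ℝ} (hf : ContDiff ℝ (⊤ : ℕ∞) f)
    (hper : ∀ p : ℝ × ℝ, f (p + (0, 2*π)) = f p) :
    ∫ p in torusSq, d2 f p = 0 := by
  have hint : IntegrableOn (d2 f) torusSq := integrableOn_torusSq (contDiff_d2 hf).continuous
  rw [torusSq_eq, Measure.volume_eq_prod] at hint ⊢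
  rw [MeasureTheory.setIntegral_prod _ hint]
  calc ∫ x in Set.Icc (0:ℝ) (2*π), ∫ y in Set.Icc (0:ℝ) (2*π), d2 f (x, y)
      = ∫ x in Set.Icc (0:ℝ) (2*π), (0:ℝ) := by
        apply MeasureTheory.setIntegral_congr_fun measurableSet_Icc
        intro x _
        exact inner_d2 hf hper x
    _ = 0 := by simp

/-- Integration by parts in the first variable. -/
lemma ibp1 {f g : ℝ × ℝ → ℝ} (hf : ContDiff ℝ (⊤ : ℕ∞) f) (hg : ContDiff ℝ (⊤ : ℕ∞) g)
    (hpf : ∀ p : ℝ × ℝ, f (p + (2*π, 0)) = f p) (hpg : ∀ p : ℝ × ℝ, g (p + (2*π, 0)) = g p) :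
    ∫ p in torusSq, d1 f p * g p = -∫ p in torusSq, f p * d1 g p := by
  have hzero := integral_d1_eq_zero (hf.mul hg)
    (fun p => by simp only [hpf p, hpg p])
  have h2 : ∫ p in torusSq, (d1 f p * g p + f p * d1 g p) = 0 :=
    (setIntegral_congr_fun measurableSet_Icc (fun p _ => (d1_mul hf hg p).symm)).trans hzero
  rw [integral_add (integrableOn_torusSq ((contDiff_d1 hf).continuous.fun_mul hg.continuous))
    (integrableOn_torusSq (hf.continuous.fun_mul (contDiff_d1 hg).continuous))] at h2
  linarith

/-- Integration by parts in the second variable. -/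
lemma ibp2 {f g : ℝ × ℝ → ℝ} (hf : ContDiff ℝ (⊤ : ℕ∞) f) (hg : ContDiff ℝ (⊤ : ℕ∞) g)
    (hpf : ∀ p : ℝ × ℝ, f (p + (0, 2*π)) = f p) (hpg : ∀ p : ℝ × ℝ, g (p + (0, 2*π)) = g p) :
    ∫ p in torusSq, d2 f p * g p = -∫ p in torusSq, f p * d2 g p := by
  have hzero := integral_d2_eq_zero (hf.mul hg)
    (fun p => by simp only [hpf p, hpg p])
  have h2 : ∫ p in torusSq, (d2 f p * g p + f p * d2 g p) = 0 :=
    (setIntegral_congr_fun measurableSet_Icc (fun p _ => (d2_mul hf hg p).symm)).trans hzero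
  rw [integral_add (integrableOn_torusSq ((contDiff_d2 hf).continuous.fun_mul hg.continuous))
    (integrableOn_torusSq (hf.continuous.fun_mul (contDiff_d2 hg).continuous))] at h2
  linarith

instance : IsFiniteMeasure (volume.restrict torusSq) := by
  constructor
  rw [Measure.restrict_apply_univ]
  exact isCompact_Icc.measure_lt_top

lemma memL2 {f : ℝ × ℝ → ℝ} (hf : Continuous f) :
    MemLp f (ENNReal.ofReal 2) (volume.restrict torusSq) := by
  obtain ⟨C, hC⟩ := isCompact_Icc.exists_bound_of_continuousOn (hf.continuousOn (s := torusSq))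
  apply MemLp.mono_exponent (q := ⊤) _ le_top
  apply memLp_top_of_bound hf.aestronglyMeasurable C
  filter_upwards [ae_restrict_mem (measurableSet_Icc (α := ℝ × ℝ))] with p hp
  exact hC p hp

/-- Cauchy–Schwarz on the torus square. -/
lemma cs {f g : ℝ × ℝ → ℝ} (hf : Continuous f) (hg : Continuous g) :
    ∫ p in torusSq, f p * g p
      ≤ Real.sqrt (∫ p in torusSq, f p ^ 2) * Real.sqrt (∫ p in torusSq, g p ^ 2) := by
  have h1 : ∫ p in torusSq, f p * g p ≤ ∫ p in torusSq, |f p| * |g p| := by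
    apply setIntegral_mono_on (integrableOn_torusSq (hf.fun_mul hg))
      (integrableOn_torusSq (hf.abs.fun_mul hg.abs)) measurableSet_Icc
    intro p _
    rw [← abs_mul]
    exact le_abs_self _
  refine h1.trans ?_
  have h2 := MeasureTheory.integral_mul_le_Lp_mul_Lq_of_nonneg
    (Real.HolderConjugate.two_two : Real.HolderConjugate 2 2) (μ := volume.restrict torusSq)
    (f := fun p => |f p|) (g := fun p => |g p|)
    (Filter.Eventually.of_forall fun p => abs_nonneg _)
    (Filter.Eventually.of_forall fun p => abs_nonneg _)
    (memL2 hf.abs) (memL2 hg.abs)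
  calc ∫ p in torusSq, |f p| * |g p|
      ≤ (∫ p in torusSq, |f p| ^ (2:ℝ)) ^ (1/(2:ℝ)) * (∫ p in torusSq, |g p| ^ (2:ℝ)) ^ (1/(2:ℝ)) := h2
    _ = Real.sqrt (∫ p in torusSq, f p ^ 2) * Real.sqrt (∫ p in torusSq, g p ^ 2) := by
        have e : ∀ h : ℝ × ℝ → ℝ, (fun p => |h p| ^ (2:ℝ)) = fun p => h p ^ 2 := by
          intro h; funext p
          rw [show (2:ℝ) = ((2:ℕ):ℝ) by norm_num, Real.rpow_natCast, sq_abs]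
        rw [e f, e g, ← Real.sqrt_eq_rpow, ← Real.sqrt_eq_rpow]

lemma reduce_pt {η : ℝ × ℝ → ℝ}
    (hx : ∀ p : ℝ × ℝ, η (p.1 + 2 * π, p.2) = η p)
    (hy : ∀ p : ℝ × ℝ, η (p.1, p.2 + 2 * π) = η p) (p : ℝ × ℝ) :
    ∃ q ∈ torusSq, η q = η p := by
  obtain ⟨x, y⟩ := p
  have hπ : 0 < 2 * π := by positivity
  set x' := x - ⌊x / (2 * π)⌋ * (2 * π) with hx'
  set y' := y - ⌊y / (2 * π)⌋ * (2 * π) with hy'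
  have hxmem : x' ∈ Set.Ico (0:ℝ) (2*π) :=
    ⟨Int.sub_floor_div_mul_nonneg x hπ, Int.sub_floor_div_mul_lt x hπ⟩
  have hymem : y' ∈ Set.Ico (0:ℝ) (2*π) :=
    ⟨Int.sub_floor_div_mul_nonneg y hπ, Int.sub_floor_div_mul_lt y hπ⟩
  refine ⟨(x', y'), ?_, ?_⟩
  · rw [torusSq]
    constructor <;> constructor <;> simp only []
    · exact hxmem.1
    · exact hymem.1
    · exact hxmem.2.le
    · exact hymem.2.le
  · have h1 : Function.Periodic (fun t => η (t, y')) (2 * π) := fun t => hx (t, y')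
    have h2 : Function.Periodic (fun t => η (x, t)) (2 * π) := fun t => hy (x, t)
    calc η (x', y') = η (x, y') := h1.sub_int_mul_eq ⌊x / (2*π)⌋
      _ = η (x, y) := h2.sub_int_mul_eq ⌊y / (2*π)⌋

lemma sup_bound {η : ℝ × ℝ → ℝ} (hc : Continuous η)
    (hx : ∀ p : ℝ × ℝ, η (p.1 + 2 * π, p.2) = η p)
    (hy : ∀ p : ℝ × ℝ, η (p.1, p.2 + 2 * π) = η p) (p : ℝ × ℝ) :
    |η p| ≤ ⨆ q : ℝ × ℝ, |η q| := by
  have hbdd : BddAbove (Set.range fun q : ℝ × ℝ => |η q|) := by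
    have hsub : Set.range (fun q : ℝ × ℝ => |η q|) ⊆ (fun q : ℝ × ℝ => |η q|) '' torusSq := by
      rintro _ ⟨q, rfl⟩
      obtain ⟨r, hr, hηr⟩ := reduce_pt hx hy q
      exact ⟨r, hr, by simp [hηr]⟩
    exact ((isCompact_Icc.image (continuous_abs.comp hc)).bddAbove).mono hsub
  exact le_ciSup hbdd p

lemma quad_lemma {x c : ℝ} (hx : 0 ≤ x) (hc : 0 ≤ c) (h : x ≤ c * Real.sqrt x) : x ≤ c ^ 2 := by
  nlinarith [Real.sq_sqrt hx, Real.sqrt_nonneg x, sq_nonneg (c - Real.sqrt x)]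

lemma Wbd (a b x y z : ℝ) :
    |(x + z) * (a^2 + b^2) + 2*a^2*x + 4*a*b*y + 2*b^2*z|
      ≤ 3 * (a^2 + b^2) * (|x| + |y| + |z|) := by
  rw [abs_le]
  constructor <;>
  nlinarith [mul_nonneg (sub_nonneg.2 (le_abs_self x)) (sq_nonneg a),
    mul_nonneg (sub_nonneg.2 (le_abs_self x)) (sq_nonneg b),
    mul_nonneg (sub_nonneg.2 (neg_le_abs x)) (sq_nonneg a),
    mul_nonneg (sub_nonneg.2 (neg_le_abs x)) (sq_nonneg b),
    mul_nonneg (sub_nonneg.2 (le_abs_self z)) (sq_nonneg a),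
    mul_nonneg (sub_nonneg.2 (le_abs_self z)) (sq_nonneg b),
    mul_nonneg (sub_nonneg.2 (neg_le_abs z)) (sq_nonneg a),
    mul_nonneg (sub_nonneg.2 (neg_le_abs z)) (sq_nonneg b),
    mul_nonneg (abs_nonneg x) (sq_nonneg a), mul_nonneg (abs_nonneg x) (sq_nonneg b),
    mul_nonneg (abs_nonneg z) (sq_nonneg a), mul_nonneg (abs_nonneg z) (sq_nonneg b),
    mul_nonneg (abs_nonneg y) (sq_nonneg (a + b)), mul_nonneg (abs_nonneg y) (sq_nonneg (a - b)),
    mul_nonneg (sub_nonneg.2 (le_abs_self y)) (sq_nonneg (a+b)),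
    mul_nonneg (sub_nonneg.2 (le_abs_self y)) (sq_nonneg (a-b)),
    mul_nonneg (sub_nonneg.2 (neg_le_abs y)) (sq_nonneg (a+b)),
    mul_nonneg (sub_nonneg.2 (neg_le_abs y)) (sq_nonneg (a-b))]

/-- `‖Δ(η²)‖_{L²} ≤ C ‖η‖_{L^∞} ‖Δη‖_{L²}` for smooth periodic functions with zero
mean on the torus `[0,2π]²`. -/
theorem stmt_1 :
    ∃ C : ℝ, 0 < C ∧ ∀ η : ℝ × ℝ → ℝ,
      ContDiff ℝ (⊤ : ℕ∞) η →
      (∀ p : ℝ × ℝ, η (p.1 + 2 * π, p.2) = η p) →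
      (∀ p : ℝ × ℝ, η (p.1, p.2 + 2 * π) = η p) →
      (∫ p in torusSq, η p) = 0 →
      Real.sqrt (∫ p in torusSq, (lap (fun q => (η q) ^ 2) p) ^ 2)
        ≤ C * (⨆ p : ℝ × ℝ, |η p|) * Real.sqrt (∫ p in torusSq, (lap η p) ^ 2) := by
  refine ⟨18, by norm_num, ?_⟩
  intro η hη hx hy _hmean
  set M := ⨆ p : ℝ × ℝ, |η p| with hMdef
  have hM : ∀ p, |η p| ≤ M := sup_bound hη.continuous hx hy
  have hM0 : (0:ℝ) ≤ M := (abs_nonneg _).trans (hM 0)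
  -- periodicity in shift form
  have hpu1 : ∀ p : ℝ × ℝ, η (p + ((2*π:ℝ), (0:ℝ))) = η p := by
    intro p
    have e : p + ((2*π:ℝ), (0:ℝ)) = (p.1 + 2*π, p.2) := by ext <;> simp
    rw [e]; exact hx p
  have hpu2 : ∀ p : ℝ × ℝ, η (p + ((0:ℝ), (2*π:ℝ))) = η p := by
    intro p
    have e : p + ((0:ℝ), (2*π:ℝ)) = (p.1, p.2 + 2*π) := by ext <;> simp
    rw [e]; exact hy p
  -- smoothness of derivatives
  have ha : ContDiff ℝ (⊤ : ℕ∞) (d1 η) := contDiff_d1 hη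
  have hb : ContDiff ℝ (⊤ : ℕ∞) (d2 η) := contDiff_d2 hη
  have haxx : ContDiff ℝ (⊤ : ℕ∞) (d1 (d1 η)) := contDiff_d1 ha
  have haxy : ContDiff ℝ (⊤ : ℕ∞) (d2 (d1 η)) := contDiff_d2 ha
  have hayx : ContDiff ℝ (⊤ : ℕ∞) (d1 (d2 η)) := contDiff_d1 hb
  have hayy : ContDiff ℝ (⊤ : ℕ∞) (d2 (d2 η)) := contDiff_d2 hb
  -- periodicity of derivatives
  have hpa1 : ∀ p : ℝ × ℝ, d1 η (p + ((2*π:ℝ), (0:ℝ))) = d1 η p := d1_shift hη _ hpu1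
  have hpa2 : ∀ p : ℝ × ℝ, d1 η (p + ((0:ℝ), (2*π:ℝ))) = d1 η p := d1_shift hη _ hpu2
  have hpb1 : ∀ p : ℝ × ℝ, d2 η (p + ((2*π:ℝ), (0:ℝ))) = d2 η p := d2_shift hη _ hpu1
  have hpb2 : ∀ p : ℝ × ℝ, d2 η (p + ((0:ℝ), (2*π:ℝ))) = d2 η p := d2_shift hη _ hpu2
  have hpayy1 : ∀ p : ℝ × ℝ, d2 (d2 η) (p + ((2*π:ℝ), (0:ℝ))) = d2 (d2 η) p :=
    d2_shift hb _ hpb1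
  have hpayx2 : ∀ p : ℝ × ℝ, d1 (d2 η) (p + ((0:ℝ), (2*π:ℝ))) = d1 (d2 η) p :=
    d1_shift hb _ hpb2
  -- symmetry of mixed second derivatives
  have hsym : ∀ p, d1 (d2 η) p = d2 (d1 η) p := d1_d2_comm hη
  -- abbreviations (as continuity facts)
  have hGsm : ContDiff ℝ (⊤ : ℕ∞) (fun q => d1 η q * d1 η q + d2 η q * d2 η q) :=
    (ha.mul ha).add (hb.mul hb)
  have cG : Continuous (fun q => d1 η q * d1 η q + d2 η q * d2 η q) := hGsm.continuous
  have cT : Continuous (fun q => |d1 (d1 η) q| + |d2 (d1 η) q| + |d2 (d2 η) q|) :=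
    ((haxx.continuous.abs.add haxy.continuous.abs).add hayy.continuous.abs)
  have cLap : Continuous (lap η) := by
    have : lap η = fun p => d1 (d1 η) p + d2 (d2 η) p := rfl
    rw [this]; exact haxx.continuous.add hayy.continuous
  -- nonneg integrals
  set J := ∫ p in torusSq, (lap η p) ^ 2 with hJdef
  have hJ0 : 0 ≤ J := setIntegral_nonneg measurableSet_Icc (fun p _ => sq_nonneg _)
  set I := ∫ p in torusSq, (d1 η p * d1 η p + d2 η p * d2 η p) ^ 2 with hIdef
  have hI0 : 0 ≤ I := setIntegral_nonneg measurableSet_Icc (fun p _ => sq_nonneg _)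
  clear_value M J I
  -- swap identity : ∫ axx * ayy = ∫ axy ^ 2
  have hswap : ∫ p in torusSq, d1 (d1 η) p * d2 (d2 η) p
      = ∫ p in torusSq, (d2 (d1 η) p) ^ 2 := by
    have e1 : ∫ p in torusSq, d1 (d1 η) p * d2 (d2 η) p
        = -∫ p in torusSq, d1 η p * d1 (d2 (d2 η)) p := ibp1 ha hayy hpa1 hpayy1
    have e2 : ∫ p in torusSq, d1 η p * d1 (d2 (d2 η)) p
        = ∫ p in torusSq, d1 η p * d2 (d1 (d2 η)) p := by
      apply setIntegral_congr_fun measurableSet_Icc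
      intro p _
      beta_reduce
      rw [d1_d2_comm hb p]
    have e3 : ∫ p in torusSq, d2 (d1 η) p * d1 (d2 η) p
        = -∫ p in torusSq, d1 η p * d2 (d1 (d2 η)) p := ibp2 ha hayx hpa2 hpayx2
    have e4 : ∫ p in torusSq, d2 (d1 η) p * d1 (d2 η) p
        = ∫ p in torusSq, (d2 (d1 η) p) ^ 2 := by
      apply setIntegral_congr_fun measurableSet_Icc
      intro p _
      beta_reduce
      rw [hsym p]; ring
    rw [e1, e2, ← e3, e4]
  -- ∫ (axx² + axy² + ayy²) ≤ J
  have hK : ∫ p in torusSq, ((d1 (d1 η) p)^2 + (d2 (d1 η) p)^2 + (d2 (d2 η) p)^2) ≤ J := by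
    have i1 : IntegrableOn (fun p => (d1 (d1 η) p)^2 + (d2 (d2 η) p)^2) torusSq :=
      integrableOn_torusSq ((haxx.continuous.pow 2).add (hayy.continuous.pow 2))
    have i2 : IntegrableOn (fun p => (d2 (d1 η) p)^2) torusSq :=
      integrableOn_torusSq (haxy.continuous.pow 2)
    have i3 : IntegrableOn (fun p => d1 (d1 η) p * d2 (d2 η) p) torusSq :=
      integrableOn_torusSq (haxx.continuous.mul hayy.continuous)
    have hJe : J = (∫ p in torusSq, ((d1 (d1 η) p)^2 + (d2 (d2 η) p)^2))
        + 2 * ∫ p in torusSq, d1 (d1 η) p * d2 (d2 η) p := by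
      rw [hJdef, ← integral_const_mul, ← integral_add i1 (i3.const_mul 2)]
      apply setIntegral_congr_fun measurableSet_Icc
      intro p _
      beta_reduce
      rw [lap_eq]; ring
    have hKe : ∫ p in torusSq, ((d1 (d1 η) p)^2 + (d2 (d1 η) p)^2 + (d2 (d2 η) p)^2)
        = (∫ p in torusSq, ((d1 (d1 η) p)^2 + (d2 (d2 η) p)^2))
          + ∫ p in torusSq, (d2 (d1 η) p) ^ 2 := by
      rw [← integral_add i1 i2]
      apply setIntegral_congr_fun measurableSet_Icc
      intro p _
      ring
    have hxy0 : 0 ≤ ∫ p in torusSq, (d2 (d1 η) p) ^ 2 :=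
      setIntegral_nonneg measurableSet_Icc (fun p _ => sq_nonneg _)
    rw [hJe, hKe, hswap]
    linarith
  -- derivative of G
  have hGd1 : ∀ p, d1 (fun q => d1 η q * d1 η q + d2 η q * d2 η q) p
      = 2 * d1 η p * d1 (d1 η) p + 2 * d2 η p * d2 (d1 η) p := by
    intro p
    rw [d1_add (ha.mul ha) (hb.mul hb) p, d1_mul ha ha p, d1_mul hb hb p, hsym p]
    ring
  have hGd2 : ∀ p, d2 (fun q => d1 η q * d1 η q + d2 η q * d2 η q) p
      = 2 * d1 η p * d2 (d1 η) p + 2 * d2 η p * d2 (d2 η) p := by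
    intro p
    rw [d2_add (ha.mul ha) (hb.mul hb) p, d2_mul ha ha p, d2_mul hb hb p]
    ring
  -- step A : I = -∫ η * W
  have hA : I = -∫ p in torusSq,
      η p * ((d1 (d1 η) p + d2 (d2 η) p) * (d1 η p * d1 η p + d2 η p * d2 η p)
        + 2*(d1 η p)^2 * d1 (d1 η) p + 4 * d1 η p * d2 η p * d2 (d1 η) p
        + 2*(d2 η p)^2 * d2 (d2 η) p) := by
    have haG : ContDiff ℝ (⊤ : ℕ∞) (fun q => d1 η q * (d1 η q * d1 η q + d2 η q * d2 η q)) :=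
      ha.mul hGsm
    have hbG : ContDiff ℝ (⊤ : ℕ∞) (fun q => d2 η q * (d1 η q * d1 η q + d2 η q * d2 η q)) :=
      hb.mul hGsm
    have hpaG : ∀ p : ℝ × ℝ, (fun q => d1 η q * (d1 η q * d1 η q + d2 η q * d2 η q))
        (p + ((2*π:ℝ), (0:ℝ))) = d1 η p * (d1 η p * d1 η p + d2 η p * d2 η p) := by
      intro p; simp only [hpa1, hpb1]
    have hpbG : ∀ p : ℝ × ℝ, (fun q => d2 η q * (d1 η q * d1 η q + d2 η q * d2 η q))
        (p + ((0:ℝ), (2*π:ℝ))) = d2 η p * (d1 η p * d1 η p + d2 η p * d2 η p) := by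
      intro p; simp only [hpa2, hpb2]
    have e1 : ∫ p in torusSq, d1 η p * (d1 η p * (d1 η p * d1 η p + d2 η p * d2 η p))
        = -∫ p in torusSq,
            η p * d1 (fun q => d1 η q * (d1 η q * d1 η q + d2 η q * d2 η q)) p :=
      ibp1 hη haG hpu1 hpaG
    have e2 : ∫ p in torusSq, d2 η p * (d2 η p * (d1 η p * d1 η p + d2 η p * d2 η p))
        = -∫ p in torusSq,
            η p * d2 (fun q => d2 η q * (d1 η q * d1 η q + d2 η q * d2 η q)) p :=
      ibp2 hη hbG hpu2 hpbG
    have iA1 : IntegrableOn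
        (fun p => d1 η p * (d1 η p * (d1 η p * d1 η p + d2 η p * d2 η p))) torusSq :=
      integrableOn_torusSq (ha.continuous.mul (ha.continuous.mul cG))
    have iA2 : IntegrableOn
        (fun p => d2 η p * (d2 η p * (d1 η p * d1 η p + d2 η p * d2 η p))) torusSq :=
      integrableOn_torusSq (hb.continuous.mul (hb.continuous.mul cG))
    have iB1 : IntegrableOn
        (fun p => η p * d1 (fun q => d1 η q * (d1 η q * d1 η q + d2 η q * d2 η q)) p)
        torusSq := integrableOn_torusSq (hη.continuous.mul (contDiff_d1 haG).continuous)
    have iB2 : IntegrableOn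
        (fun p => η p * d2 (fun q => d2 η q * (d1 η q * d1 η q + d2 η q * d2 η q)) p)
        torusSq := integrableOn_torusSq (hη.continuous.mul (contDiff_d2 hbG).continuous)
    have split : I = (∫ p in torusSq, d1 η p * (d1 η p * (d1 η p * d1 η p + d2 η p * d2 η p)))
        + ∫ p in torusSq, d2 η p * (d2 η p * (d1 η p * d1 η p + d2 η p * d2 η p)) := by
      rw [hIdef, ← integral_add iA1 iA2]
      apply setIntegral_congr_fun measurableSet_Icc
      intro p _
      ring
    rw [split, e1, e2, ← neg_add, ← integral_add iB1 iB2]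
    congr 1
    apply setIntegral_congr_fun measurableSet_Icc
    intro p _
    beta_reduce
    rw [d1_mul ha hGsm p, d2_mul hb hGsm p, hGd1 p, hGd2 p]
    ring
  -- step B : I ≤ 3M ∫ G T
  have cW : Continuous (fun p =>
      -(η p * ((d1 (d1 η) p + d2 (d2 η) p) * (d1 η p * d1 η p + d2 η p * d2 η p)
        + 2*(d1 η p)^2 * d1 (d1 η) p + 4 * d1 η p * d2 η p * d2 (d1 η) p
        + 2*(d2 η p)^2 * d2 (d2 η) p))) := by
    apply Continuous.neg
    apply hη.continuous.mul
    exact ((((haxx.continuous.add hayy.continuous).mul cG).add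
      (((continuous_const.mul (ha.continuous.pow 2)).mul haxx.continuous))).add
      ((((continuous_const.mul ha.continuous).mul hb.continuous).mul haxy.continuous))).add
      ((continuous_const.mul (hb.continuous.pow 2)).mul hayy.continuous)
  have cGT : Continuous (fun p => (d1 η p * d1 η p + d2 η p * d2 η p)
      * (|d1 (d1 η) p| + |d2 (d1 η) p| + |d2 (d2 η) p|)) := cG.mul cT
  have hB : I ≤ 3 * M * ∫ p in torusSq,
      (d1 η p * d1 η p + d2 η p * d2 η p)
        * (|d1 (d1 η) p| + |d2 (d1 η) p| + |d2 (d2 η) p|) := by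
    rw [hA, ← integral_neg, ← integral_const_mul]
    apply setIntegral_mono_on (integrableOn_torusSq cW)
      (integrableOn_torusSq (continuous_const.fun_mul cGT)) measurableSet_Icc
    intro p _
    beta_reduce
    have hbd := Wbd (d1 η p) (d2 η p) (d1 (d1 η) p) (d2 (d1 η) p) (d2 (d2 η) p)
    have habs := hM p
    calc -(η p * ((d1 (d1 η) p + d2 (d2 η) p) * (d1 η p * d1 η p + d2 η p * d2 η p)
        + 2*(d1 η p)^2 * d1 (d1 η) p + 4 * d1 η p * d2 η p * d2 (d1 η) p
        + 2*(d2 η p)^2 * d2 (d2 η) p))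
        ≤ |η p * ((d1 (d1 η) p + d2 (d2 η) p) * (d1 η p * d1 η p + d2 η p * d2 η p)
        + 2*(d1 η p)^2 * d1 (d1 η) p + 4 * d1 η p * d2 η p * d2 (d1 η) p
        + 2*(d2 η p)^2 * d2 (d2 η) p)| := neg_le_abs _
      _ = |η p| * |(d1 (d1 η) p + d2 (d2 η) p) * (d1 η p * d1 η p + d2 η p * d2 η p)
        + 2*(d1 η p)^2 * d1 (d1 η) p + 4 * d1 η p * d2 η p * d2 (d1 η) p
        + 2*(d2 η p)^2 * d2 (d2 η) p| := abs_mul _ _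
      _ ≤ M * (3 * ((d1 η p)^2 + (d2 η p)^2)
          * (|d1 (d1 η) p| + |d2 (d1 η) p| + |d2 (d2 η) p|)) := by
          apply mul_le_mul habs ?_ (abs_nonneg _) hM0
          have e : (d1 (d1 η) p + d2 (d2 η) p) * (d1 η p * d1 η p + d2 η p * d2 η p)
              + 2*(d1 η p)^2 * d1 (d1 η) p + 4 * d1 η p * d2 η p * d2 (d1 η) p
              + 2*(d2 η p)^2 * d2 (d2 η) p
              = (d1 (d1 η) p + d2 (d2 η) p) * ((d1 η p)^2 + (d2 η p)^2)
              + 2*(d1 η p)^2 * d1 (d1 η) p + 4 * (d1 η p) * (d2 η p) * d2 (d1 η) p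
              + 2*(d2 η p)^2 * d2 (d2 η) p := by ring
          rw [e]
          exact hbd
      _ = 3 * M * ((d1 η p * d1 η p + d2 η p * d2 η p)
          * (|d1 (d1 η) p| + |d2 (d1 η) p| + |d2 (d2 η) p|)) := by ring
  -- Cauchy-Schwarz and T bound
  have hCS := cs cG cT
  have hT2 : (∫ p in torusSq, (|d1 (d1 η) p| + |d2 (d1 η) p| + |d2 (d2 η) p|) ^ 2) ≤ 3 * J := by
    have step : (∫ p in torusSq, (|d1 (d1 η) p| + |d2 (d1 η) p| + |d2 (d2 η) p|) ^ 2)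
        ≤ ∫ p in torusSq, 3 * ((d1 (d1 η) p)^2 + (d2 (d1 η) p)^2 + (d2 (d2 η) p)^2) := by
      apply setIntegral_mono_on (integrableOn_torusSq (cT.fun_pow 2))
        (integrableOn_torusSq (continuous_const.fun_mul
          (((haxx.continuous.fun_pow 2).fun_add (haxy.continuous.fun_pow 2)).fun_add (hayy.continuous.fun_pow 2))))
        measurableSet_Icc
      intro p _
      beta_reduce
      nlinarith [sq_nonneg (|d1 (d1 η) p| - |d2 (d1 η) p|),
        sq_nonneg (|d1 (d1 η) p| - |d2 (d2 η) p|),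
        sq_nonneg (|d2 (d1 η) p| - |d2 (d2 η) p|),
        sq_abs (d1 (d1 η) p), sq_abs (d2 (d1 η) p), sq_abs (d2 (d2 η) p)]
    rw [integral_const_mul] at step
    linarith
  have hsqI : ∫ p in torusSq, (d1 η p * d1 η p + d2 η p * d2 η p)
      * (|d1 (d1 η) p| + |d2 (d1 η) p| + |d2 (d2 η) p|)
      ≤ Real.sqrt I * Real.sqrt (3 * J) := by
    rw [hIdef]
    refine hCS.trans ?_
    apply mul_le_mul_of_nonneg_left (Real.sqrt_le_sqrt hT2) (Real.sqrt_nonneg _)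
  have hle : I ≤ (3 * M * Real.sqrt (3 * J)) * Real.sqrt I := by
    calc I ≤ 3 * M * ∫ p in torusSq, (d1 η p * d1 η p + d2 η p * d2 η p)
          * (|d1 (d1 η) p| + |d2 (d1 η) p| + |d2 (d2 η) p|) := hB
      _ ≤ 3 * M * (Real.sqrt I * Real.sqrt (3 * J)) :=
          mul_le_mul_of_nonneg_left hsqI (by positivity)
      _ = (3 * M * Real.sqrt (3 * J)) * Real.sqrt I := by ring
  have hI27 : I ≤ 27 * M^2 * J := by
    have h2 := quad_lemma hI0 (by positivity) hle
    have h3 : (3 * M * Real.sqrt (3 * J))^2 = 27 * M^2 * J := by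
      rw [mul_pow, mul_pow, Real.sq_sqrt (by linarith)]
      ring
    linarith
  -- Laplacian of η²
  have hfun : (fun q => η q ^ 2) = (fun q => η q * η q) := by funext q; ring
  have hd1sq : d1 (fun q => η q * η q) = fun p => d1 η p * η p + η p * d1 η p :=
    funext (d1_mul hη hη)
  have hd2sq : d2 (fun q => η q * η q) = fun p => d2 η p * η p + η p * d2 η p :=
    funext (d2_mul hη hη)
  have hlapsq : ∀ p, lap (fun q => η q ^ 2) p
      = 2 * η p * lap η p + 2 * (d1 η p * d1 η p + d2 η p * d2 η p) := by
    intro p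
    rw [hfun, lap_eq, hd1sq, hd2sq,
      d1_add (ha.mul hη) (hη.mul ha) p, d1_mul ha hη p, d1_mul hη ha p,
      d2_add (hb.mul hη) (hη.mul hb) p, d2_mul hb hη p, d2_mul hη hb p, lap_eq]
    ring
  have cLap2 : Continuous (lap (fun q => η q ^ 2)) := by
    have : lap (fun q => η q ^ 2)
        = fun p => 2 * η p * lap η p + 2 * (d1 η p * d1 η p + d2 η p * d2 η p) :=
      funext hlapsq
    rw [this]
    exact (((continuous_const.mul hη.continuous).mul cLap).add (continuous_const.mul cG))
  -- final bound on the L² norm of lap (η²)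
  have hmain : ∫ p in torusSq, (lap (fun q => η q ^ 2) p) ^ 2
      ≤ 8 * M^2 * J + 8 * I := by
    have e : ∫ p in torusSq, (lap (fun q => η q ^ 2) p) ^ 2
        ≤ ∫ p in torusSq, (8 * M^2 * (lap η p)^2
            + 8 * ((d1 η p * d1 η p + d2 η p * d2 η p))^2) := by
      apply setIntegral_mono_on (integrableOn_torusSq (cLap2.fun_pow 2))
        (integrableOn_torusSq ((continuous_const.fun_mul (cLap.fun_pow 2)).fun_add
          (continuous_const.fun_mul (cG.fun_pow 2)))) measurableSet_Icc
      intro p _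
      beta_reduce
      rw [hlapsq p]
      have hη2 : (η p)^2 ≤ M^2 := by
        have := hM p
        nlinarith [abs_nonneg (η p), sq_abs (η p)]
      nlinarith [sq_nonneg (η p * lap η p - (d1 η p * d1 η p + d2 η p * d2 η p)),
        mul_le_mul_of_nonneg_right hη2 (sq_nonneg (lap η p))]
    refine e.trans ?_
    rw [integral_add ((integrableOn_torusSq (cLap.fun_pow 2)).const_mul (8 * M^2))
      ((integrableOn_torusSq (cG.fun_pow 2)).const_mul 8), integral_const_mul, integral_const_mul,
      ← hJdef, ← hIdef]
  have final2 : ∫ p in torusSq, (lap (fun q => η q ^ 2) p) ^ 2 ≤ (18 * M)^2 * J := by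
    have h1 : 8 * M^2 * J + 8 * I ≤ 8 * M^2 * J + 8 * (27 * M^2 * J) := by linarith
    have h2 : (8:ℝ) * M^2 * J + 8 * (27 * M^2 * J) ≤ (18 * M)^2 * J := by
      nlinarith [mul_nonneg (sq_nonneg M) hJ0]
    linarith
  calc Real.sqrt (∫ p in torusSq, (lap (fun q => η q ^ 2) p) ^ 2)
      ≤ Real.sqrt ((18 * M)^2 * J) := Real.sqrt_le_sqrt final2
    _ = 18 * M * Real.sqrt J := by
        rw [Real.sqrt_mul (sq_nonneg _), Real.sqrt_sq (by positivity)]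
end

section
/- With the Gevrey inner product ⟨μ,η⟩_σ = 4π^2 Σ_{ℓ∈Z^2} e^{2σ|ℓ|} μ̂(ℓ) · conj(η̂(ℓ)), the nonlinear term of the Kuramoto–Sivashinsky equation satisfies |⟨η η_x, η⟩_σ| ≤ c ‖Λη‖_σ ‖Λ^{1/2}η‖_σ^2 for some universal constant c, for all sufficiently regular real-valued η on T^2 with zero mean. -/
open Real

/-- Euclidean magnitude of a lattice point `ξ ∈ ℤ²`. -/
noncomputable def mag (ξ : ℤ × ℤ) : ℝ := Real.sqrt ((ξ.1 : ℝ) ^ 2 + (ξ.2 : ℝ) ^ 2)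

open ENNReal NNReal MeasureTheory

lemma mag_nonneg (ξ : ℤ × ℤ) : 0 ≤ mag ξ := Real.sqrt_nonneg _

lemma mag_zero : mag 0 = 0 := by simp [mag]

lemma abs_fst_le (ξ : ℤ × ℤ) : |(ξ.1 : ℝ)| ≤ mag ξ := by
  rw [mag, ← Real.sqrt_sq_eq_abs]
  exact Real.sqrt_le_sqrt (by nlinarith [sq_nonneg ((ξ.2 : ℝ))])

lemma abs_snd_le (ξ : ℤ × ℤ) : |(ξ.2 : ℝ)| ≤ mag ξ := by
  rw [mag, ← Real.sqrt_sq_eq_abs]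
  exact Real.sqrt_le_sqrt (by nlinarith [sq_nonneg ((ξ.1 : ℝ))])

lemma one_le_mag {ξ : ℤ × ℤ} (h : ξ ≠ 0) : 1 ≤ mag ξ := by
  rcases eq_or_ne ξ.1 0 with h1 | h1
  · have h2 : ξ.2 ≠ 0 := fun h2 => h (Prod.ext h1 h2)
    calc (1:ℝ) = |((1:ℤ):ℝ)| := by norm_num
    _ ≤ |(ξ.2:ℝ)| := by
        rw [← Int.cast_abs, ← Int.cast_abs]
        exact_mod_cast Int.one_le_abs h2
    _ ≤ mag ξ := abs_snd_le ξ
  · calc (1:ℝ) = |((1:ℤ):ℝ)| := by norm_num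
    _ ≤ |(ξ.1:ℝ)| := by
        rw [← Int.cast_abs, ← Int.cast_abs]
        exact_mod_cast Int.one_le_abs h1
    _ ≤ mag ξ := abs_fst_le ξ

lemma mag_pos {ξ : ℤ × ℤ} (h : ξ ≠ 0) : 0 < mag ξ :=
  lt_of_lt_of_le one_pos (one_le_mag h)

lemma mag_triangle (x y : ℤ × ℤ) : mag (x + y) ≤ mag x + mag y := by
  have hc : (x.1:ℝ) * y.1 + x.2 * y.2 ≤ mag x * mag y := by
    rw [mag, mag, ← Real.sqrt_mul (by positivity)]
    calc (x.1:ℝ) * y.1 + x.2 * y.2 ≤ |(x.1:ℝ) * y.1 + x.2 * y.2| := le_abs_self _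
    _ = Real.sqrt (((x.1:ℝ) * y.1 + x.2 * y.2)^2) := (Real.sqrt_sq_eq_abs _).symm
    _ ≤ Real.sqrt (((x.1:ℝ)^2 + x.2^2) * ((y.1:ℝ)^2 + y.2^2)) :=
        Real.sqrt_le_sqrt (by nlinarith [sq_nonneg ((x.1:ℝ)*y.2 - x.2*y.1)])
  have h1 : mag (x+y) = Real.sqrt (((x.1:ℝ)+y.1)^2 + ((x.2:ℝ)+y.2)^2) := by
    simp [mag, Prod.fst_add, Prod.snd_add]
  rw [h1]
  have h2 : (((x.1:ℝ)+y.1)^2 + ((x.2:ℝ)+y.2)^2) ≤ (mag x + mag y)^2 := by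
    have hx : mag x ^ 2 = (x.1:ℝ)^2 + x.2^2 := Real.sq_sqrt (by positivity)
    have hy : mag y ^ 2 = (y.1:ℝ)^2 + y.2^2 := Real.sq_sqrt (by positivity)
    nlinarith
  calc Real.sqrt (((x.1:ℝ)+y.1)^2 + ((x.2:ℝ)+y.2)^2) ≤ Real.sqrt ((mag x + mag y)^2) :=
        Real.sqrt_le_sqrt h2
  _ = |mag x + mag y| := Real.sqrt_sq_eq_abs _
  _ = mag x + mag y := abs_of_nonneg (add_nonneg (mag_nonneg x) (mag_nonneg y))

lemma mag_neg (x : ℤ × ℤ) : mag (-x) = mag x := by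
  unfold mag
  rw [Prod.fst_neg, Prod.snd_neg]
  push_cast
  ring_nf

lemma mag_sub_le (ℓ j : ℤ × ℤ) : mag ℓ ≤ mag j + mag (ℓ - j) := by
  have := mag_triangle j (ℓ - j)
  simpa using this

/-- the box `[-n,n]²` as a finset -/
noncomputable def boxF (n : ℕ) : Finset (ℤ × ℤ) := Finset.Icc (-(n:ℤ)) n ×ˢ Finset.Icc (-(n:ℤ)) n

lemma mem_boxF {n : ℕ} {j : ℤ × ℤ} : j ∈ boxF n ↔ |j.1| ≤ (n:ℤ) ∧ |j.2| ≤ (n:ℤ) := by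
  simp [boxF, abs_le]

lemma card_boxF (n : ℕ) : (boxF n).card = (2*n+1)^2 := by
  simp [boxF, Int.card_Icc]
  rw [show ((n:ℤ)+1+n) = ((2*n+1:ℕ):ℤ) by push_cast; ring, Int.toNat_natCast]; ring

lemma boxF_mono {n : ℕ} : boxF n ⊆ boxF (n+1) := by
  intro j hj; rw [mem_boxF] at *; push_cast; omega

/-- not in box n means magnitude > n -/
lemma mag_ge_of_not_mem_boxF {n : ℕ} {j : ℤ × ℤ} (h : j ∉ boxF n) : (n:ℝ) + 1 ≤ mag j := by
  rw [mem_boxF] at h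
  push_neg at h
  rcases le_or_gt (|j.1|) (n:ℤ) with h1 | h1
  · have h2 := h h1
    calc ((n:ℝ)+1) = ((n+1 : ℤ):ℝ) := by push_cast; ring
    _ ≤ ((|j.2| : ℤ):ℝ) := by exact_mod_cast (by omega : (n:ℤ)+1 ≤ |j.2|)
    _ = |(j.2:ℝ)| := by push_cast; ring
    _ ≤ mag j := abs_snd_le j
  · calc ((n:ℝ)+1) = ((n+1 : ℤ):ℝ) := by push_cast; ring
    _ ≤ ((|j.1| : ℤ):ℝ) := by exact_mod_cast (by omega : (n:ℤ)+1 ≤ |j.1|)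
    _ = |(j.1:ℝ)| := by push_cast; ring
    _ ≤ mag j := abs_fst_le j

lemma box_sum (N : ℕ) :
    (∑ j ∈ boxF N, (if j = 0 then 0 else (mag j)⁻¹)) ≤ 8 * N := by
  induction N with
  | zero =>
      have h0 : boxF 0 = {0} := by
        ext j; simp [mem_boxF, Prod.ext_iff]
      simp [h0]
  | succ N ih =>
      have hsub : boxF N ⊆ boxF (N+1) := boxF_mono
      rw [← Finset.sum_sdiff hsub]
      have hdiff : (∑ j ∈ boxF (N+1) \ boxF N, (if j = 0 then 0 else (mag j)⁻¹))
          ≤ (boxF (N+1) \ boxF N).card • (((N:ℝ)+1)⁻¹) := by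
        apply Finset.sum_le_card_nsmul
        intro j hj
        rw [Finset.mem_sdiff] at hj
        have hm : (N:ℝ) + 1 ≤ mag j := mag_ge_of_not_mem_boxF hj.2
        have hj0 : j ≠ 0 := by
          intro h; apply hj.2; rw [h, mem_boxF]; simp
        rw [if_neg hj0]
        exact inv_anti₀ (by positivity) hm
      have hcard : (boxF (N+1) \ boxF N).card = 8*N+8 := by
        rw [Finset.card_sdiff_of_subset hsub, card_boxF, card_boxF]; ring_nf; omega
      rw [hcard, nsmul_eq_mul] at hdiff
      push_cast at hdiff ⊢
      have hNe : ((N:ℝ)+1) ≠ 0 := by positivity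
      calc (∑ j ∈ boxF (N+1) \ boxF N, (if j = 0 then 0 else (mag j)⁻¹))
            + (∑ j ∈ boxF N, (if j = 0 then 0 else (mag j)⁻¹))
          ≤ (8*(N:ℝ)+8) * ((N:ℝ)+1)⁻¹ + 8*N := by gcongr
      _ = 8*((N:ℝ)+1) := by field_simp; ring

lemma tsum_CS {α : Type*} [Countable α] [MeasurableSpace α] [MeasurableSingletonClass α]
    (f g : α → ℝ≥0∞) :
    ∑' x, f x * g x ≤ (∑' x, f x * f x) ^ (1/2 : ℝ) * (∑' x, g x * g x) ^ (1/2 : ℝ) := by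
  have hpq : Real.HolderConjugate 2 2 := Real.HolderConjugate.two_two
  have h := ENNReal.lintegral_mul_le_Lp_mul_Lq (Measure.count (α := α)) hpq
    (measurable_of_countable f).aemeasurable (measurable_of_countable g).aemeasurable
  simpa [lintegral_count, Pi.mul_apply, pow_two, ← ENNReal.rpow_natCast,
    ENNReal.rpow_two] using h

/-- `∑_{0<|j|≤R} 1/|j| ≤ 8 R` -/
lemma tsum_inv_mag_le (R : ℝ) (hR : 0 ≤ R) :
    ∑' j : ℤ × ℤ, (if j ≠ 0 ∧ mag j ≤ R then ENNReal.ofReal (mag j)⁻¹ else 0)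
      ≤ ENNReal.ofReal (8 * R) := by
  set N := ⌊R⌋₊ with hN
  have hsupp : ∀ j : ℤ × ℤ, j ∉ boxF N →
      (if j ≠ 0 ∧ mag j ≤ R then ENNReal.ofReal (mag j)⁻¹ else 0) = 0 := by
    intro j hj
    rw [if_neg]
    rintro ⟨hj0, hjR⟩
    have h1 : (N:ℝ) + 1 ≤ mag j := mag_ge_of_not_mem_boxF hj
    have h2 : R < (N:ℝ) + 1 := Nat.lt_floor_add_one R
    linarith
  rw [tsum_eq_sum hsupp]
  calc ∑ j ∈ boxF N, (if j ≠ 0 ∧ mag j ≤ R then ENNReal.ofReal (mag j)⁻¹ else 0)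
      ≤ ∑ j ∈ boxF N, ENNReal.ofReal (if j = 0 then 0 else (mag j)⁻¹) := by
        apply Finset.sum_le_sum
        intro j _
        split_ifs with h1 h2 h2
        · exact absurd h2 h1.1
        · exact le_refl _
        · simp
        · simp
  _ = ENNReal.ofReal (∑ j ∈ boxF N, (if j = 0 then 0 else (mag j)⁻¹)) := by
        rw [ENNReal.ofReal_sum_of_nonneg]
        intro j _
        split_ifs
        · exact le_refl _
        · exact inv_nonneg.2 (mag_nonneg j)
  _ ≤ ENNReal.ofReal (8 * N) := ENNReal.ofReal_le_ofReal (box_sum N)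
  _ ≤ ENNReal.ofReal (8 * R) := ENNReal.ofReal_le_ofReal (by
        have := Nat.floor_le hR
        linarith)

/-- uniform bound on the convolution kernel -/
lemma kernel_bound (m : ℤ × ℤ) :
    ∑' j : ℤ × ℤ, (if j ≠ 0 ∧ j + m ≠ 0 ∧ mag j ≤ mag m then
        ENNReal.ofReal ((mag j)⁻¹ * (mag (j + m))⁻¹) else 0)
      ≤ ENNReal.ofReal 40 := by
  by_cases hm : m = 0
  · subst hm
    have : ∀ j : ℤ × ℤ, (if j ≠ 0 ∧ j + 0 ≠ 0 ∧ mag j ≤ mag 0 then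
        ENNReal.ofReal ((mag j)⁻¹ * (mag (j + 0))⁻¹) else 0) = 0 := by
      intro j
      rw [if_neg]
      rintro ⟨hj0, _, hjm⟩
      exact absurd (hjm.trans_eq mag_zero) (not_le.2 (mag_pos hj0))
    simp only [this, tsum_zero]
    exact zero_le
  have hM : 0 < mag m := mag_pos hm
  set M := mag m with hMdef
  have hpt : ∀ j : ℤ × ℤ, (if j ≠ 0 ∧ j + m ≠ 0 ∧ mag j ≤ mag m then
        ENNReal.ofReal ((mag j)⁻¹ * (mag (j + m))⁻¹) else 0)
      ≤ (if j ≠ 0 ∧ mag j ≤ M/2 then ENNReal.ofReal ((2/M) * (mag j)⁻¹) else 0)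
        + (if j + m ≠ 0 ∧ mag (j + m) ≤ 2*M then
            ENNReal.ofReal ((2/M) * (mag (j + m))⁻¹) else 0) := by
    intro j
    by_cases h : j ≠ 0 ∧ j + m ≠ 0 ∧ mag j ≤ mag m
    · rw [if_pos h]
      obtain ⟨hj0, hjm0, hjM⟩ := h
      have hjpos : 0 < mag j := mag_pos hj0
      have hjmpos : 0 < mag (j+m) := mag_pos hjm0
      by_cases hsmall : mag j ≤ M/2
      · have hge : M/2 ≤ mag (j+m) := by
          have h1 : mag m ≤ mag (j+m) + mag j := by
            have h2 := mag_triangle (j+m) (-j)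
            have h3 : (j + m) + (-j) = m := by ring
            rw [h3, mag_neg] at h2
            exact h2
          linarith
        have hinv : (mag (j+m))⁻¹ ≤ 2/M := by
          have := inv_anti₀ (show (0:ℝ) < M/2 by positivity) hge
          rw [show ((M:ℝ)/2)⁻¹ = 2/M by field_simp] at this
          exact this
        rw [if_pos ⟨hj0, hsmall⟩]
        refine le_trans (ENNReal.ofReal_le_ofReal ?_) le_self_add
        rw [mul_comm]
        exact mul_le_mul_of_nonneg_right hinv (inv_nonneg.2 (mag_nonneg j))
      · push_neg at hsmall
        have hinv : (mag j)⁻¹ ≤ 2/M := by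
          have := inv_anti₀ (show (0:ℝ) < M/2 by positivity) hsmall.le
          rw [show ((M:ℝ)/2)⁻¹ = 2/M by field_simp] at this
          exact this
        have h2M : mag (j+m) ≤ 2*M := by
          have := mag_triangle j m
          rw [← hMdef] at this
          linarith
        have hfirst : (if j ≠ 0 ∧ mag j ≤ M/2 then ENNReal.ofReal ((2/M) * (mag j)⁻¹) else 0)
            = 0 := if_neg (by rintro ⟨-, hh⟩; linarith)
        rw [hfirst, if_pos ⟨hjm0, h2M⟩, zero_add]
        exact ENNReal.ofReal_le_ofReal
          (mul_le_mul_of_nonneg_right hinv (inv_nonneg.2 (mag_nonneg _)))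
    · rw [if_neg h]
      exact zero_le
  calc ∑' j : ℤ × ℤ, (if j ≠ 0 ∧ j + m ≠ 0 ∧ mag j ≤ mag m then
        ENNReal.ofReal ((mag j)⁻¹ * (mag (j + m))⁻¹) else 0)
      ≤ ∑' j : ℤ × ℤ, ((if j ≠ 0 ∧ mag j ≤ M/2 then ENNReal.ofReal ((2/M) * (mag j)⁻¹) else 0)
        + (if j + m ≠ 0 ∧ mag (j + m) ≤ 2*M then
            ENNReal.ofReal ((2/M) * (mag (j + m))⁻¹) else 0)) := ENNReal.tsum_le_tsum hpt
  _ = (∑' j : ℤ × ℤ, (if j ≠ 0 ∧ mag j ≤ M/2 then ENNReal.ofReal ((2/M) * (mag j)⁻¹) else 0))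
        + (∑' j : ℤ × ℤ, (if j + m ≠ 0 ∧ mag (j + m) ≤ 2*M then
            ENNReal.ofReal ((2/M) * (mag (j + m))⁻¹) else 0)) := ENNReal.tsum_add
  _ ≤ ENNReal.ofReal 8 + ENNReal.ofReal 32 := by
      gcongr
      · -- first sum
        calc ∑' j : ℤ × ℤ, (if j ≠ 0 ∧ mag j ≤ M/2 then ENNReal.ofReal ((2/M) * (mag j)⁻¹) else 0)
            = ENNReal.ofReal (2/M) * ∑' j : ℤ × ℤ,
                (if j ≠ 0 ∧ mag j ≤ M/2 then ENNReal.ofReal (mag j)⁻¹ else 0) := by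
              rw [← ENNReal.tsum_mul_left]
              congr 1; funext j
              split_ifs with h
              · rw [ENNReal.ofReal_mul (by positivity)]
              · simp
        _ ≤ ENNReal.ofReal (2/M) * ENNReal.ofReal (8 * (M/2)) := by
              gcongr
              exact tsum_inv_mag_le (M/2) (by positivity)
        _ = ENNReal.ofReal ((2/M) * (8 * (M/2))) := by
              rw [← ENNReal.ofReal_mul (by positivity)]
        _ = ENNReal.ofReal 8 := by
              congr 1; field_simp
      · -- second sum: reindex by translation
        have hre : (∑' j : ℤ × ℤ, (if j + m ≠ 0 ∧ mag (j + m) ≤ 2*M then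
              ENNReal.ofReal ((2/M) * (mag (j + m))⁻¹) else 0))
            = ∑' i : ℤ × ℤ, (if i ≠ 0 ∧ mag i ≤ 2*M then
              ENNReal.ofReal ((2/M) * (mag i)⁻¹) else 0) :=
          (Equiv.addRight m).tsum_eq fun i => (if i ≠ 0 ∧ mag i ≤ 2*M then
              ENNReal.ofReal ((2/M) * (mag i)⁻¹) else 0)
        rw [hre]
        calc ∑' i : ℤ × ℤ, (if i ≠ 0 ∧ mag i ≤ 2*M then
              ENNReal.ofReal ((2/M) * (mag i)⁻¹) else 0)
            = ENNReal.ofReal (2/M) * ∑' i : ℤ × ℤ,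
                (if i ≠ 0 ∧ mag i ≤ 2*M then ENNReal.ofReal (mag i)⁻¹ else 0) := by
              rw [← ENNReal.tsum_mul_left]
              congr 1; funext i
              split_ifs with h
              · rw [ENNReal.ofReal_mul (by positivity)]
              · simp
        _ ≤ ENNReal.ofReal (2/M) * ENNReal.ofReal (8 * (2*M)) := by
              gcongr
              exact tsum_inv_mag_le (2*M) (by positivity)
        _ = ENNReal.ofReal ((2/M) * (8 * (2*M))) := by
              rw [← ENNReal.ofReal_mul (by positivity)]
        _ = ENNReal.ofReal 32 := by
              congr 1; field_simp; ring
  _ = ENNReal.ofReal 40 := by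
      rw [← ENNReal.ofReal_add (by norm_num) (by norm_num)]
      norm_num

section Aux
variable (c : ℤ × ℤ → ℂ) (σ : ℝ)

noncomputable def eaR (ξ : ℤ × ℤ) : ℝ := Real.exp (σ * mag ξ) * ‖c ξ‖
noncomputable def ea (ξ : ℤ × ℤ) : ℝ≥0∞ := ENNReal.ofReal (eaR c σ ξ)
noncomputable def bb (ξ : ℤ × ℤ) : ℝ≥0∞ := ENNReal.ofReal (Real.sqrt (mag ξ) * eaR c σ ξ)
noncomputable def dd (ξ : ℤ × ℤ) : ℝ≥0∞ := ENNReal.ofReal (mag ξ * eaR c σ ξ)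
noncomputable def sqW (m j : ℤ × ℤ) : ℝ≥0∞ :=
  if j ≠ 0 ∧ j + m ≠ 0 ∧ mag j ≤ mag m then
    ENNReal.ofReal ((Real.sqrt (mag j))⁻¹ * (Real.sqrt (mag (j + m)))⁻¹) else 0

noncomputable def HH (q : (ℤ × ℤ) × (ℤ × ℤ)) : ℝ≥0∞ :=
  ENNReal.ofReal (mag q.1 * eaR c σ q.1 * eaR c σ q.2 * eaR c σ (q.1 + q.2))

variable {c : ℤ × ℤ → ℂ} {σ : ℝ}

lemma eaR_nonneg (ξ : ℤ × ℤ) : 0 ≤ eaR c σ ξ := by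
  unfold eaR; positivity

lemma tsum_sqW_sq (m : ℤ × ℤ) :
    ∑' j : ℤ × ℤ, sqW m j * sqW m j ≤ ENNReal.ofReal 40 := by
  have h : ∀ j : ℤ × ℤ, sqW m j * sqW m j = (if j ≠ 0 ∧ j + m ≠ 0 ∧ mag j ≤ mag m then
      ENNReal.ofReal ((mag j)⁻¹ * (mag (j + m))⁻¹) else 0) := by
    intro j
    unfold sqW
    split_ifs with hc
    · rw [← ENNReal.ofReal_mul (by positivity)]
      congr 1
      have h1 : Real.sqrt (mag j) * Real.sqrt (mag j) = mag j := Real.mul_self_sqrt (mag_nonneg j)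
      have h2 : Real.sqrt (mag (j+m)) * Real.sqrt (mag (j+m)) = mag (j+m) :=
        Real.mul_self_sqrt (mag_nonneg _)
      have h3 : ((Real.sqrt (mag j))⁻¹ * (Real.sqrt (mag (j+m)))⁻¹)
            * ((Real.sqrt (mag j))⁻¹ * (Real.sqrt (mag (j+m)))⁻¹)
          = (Real.sqrt (mag j) * Real.sqrt (mag j))⁻¹
            * (Real.sqrt (mag (j+m)) * Real.sqrt (mag (j+m)))⁻¹ := by ring
      rw [h3, h1, h2]
    · simp
  rw [tsum_congr h]
  exact kernel_bound m

lemma P1_bound :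
    ∑' q : (ℤ × ℤ) × (ℤ × ℤ), (dd c σ q.2 * sqW q.2 q.1) * (dd c σ q.2 * sqW q.2 q.1)
      ≤ ENNReal.ofReal 40 * ∑' ξ : ℤ × ℤ, dd c σ ξ * dd c σ ξ := by
  rw [ENNReal.tsum_prod', ENNReal.tsum_comm]
  calc ∑' k : ℤ × ℤ, ∑' j : ℤ × ℤ, (dd c σ k * sqW k j) * (dd c σ k * sqW k j)
      = ∑' k : ℤ × ℤ, (dd c σ k * dd c σ k) * ∑' j : ℤ × ℤ, sqW k j * sqW k j := by
        apply tsum_congr; intro k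
        rw [← ENNReal.tsum_mul_left]
        apply tsum_congr; intro j; ring
  _ ≤ ∑' k : ℤ × ℤ, (dd c σ k * dd c σ k) * ENNReal.ofReal 40 := by
        apply ENNReal.tsum_le_tsum; intro k
        exact mul_le_mul_right (tsum_sqW_sq k) _
  _ = ENNReal.ofReal 40 * ∑' ξ : ℤ × ℤ, dd c σ ξ * dd c σ ξ := by
        rw [ENNReal.tsum_mul_right]; ring

lemma P2_bound :
    ∑' q : (ℤ × ℤ) × (ℤ × ℤ), (dd c σ q.1 * sqW q.1 q.2) * (dd c σ q.1 * sqW q.1 q.2)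
      ≤ ENNReal.ofReal 40 * ∑' ξ : ℤ × ℤ, dd c σ ξ * dd c σ ξ := by
  rw [ENNReal.tsum_prod']
  calc ∑' j : ℤ × ℤ, ∑' k : ℤ × ℤ, (dd c σ j * sqW j k) * (dd c σ j * sqW j k)
      = ∑' j : ℤ × ℤ, (dd c σ j * dd c σ j) * ∑' k : ℤ × ℤ, sqW j k * sqW j k := by
        apply tsum_congr; intro j
        rw [← ENNReal.tsum_mul_left]
        apply tsum_congr; intro k; ring
  _ ≤ ∑' j : ℤ × ℤ, (dd c σ j * dd c σ j) * ENNReal.ofReal 40 := by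
        apply ENNReal.tsum_le_tsum; intro j
        exact mul_le_mul_right (tsum_sqW_sq j) _
  _ = ENNReal.ofReal 40 * ∑' ξ : ℤ × ℤ, dd c σ ξ * dd c σ ξ := by
        rw [ENNReal.tsum_mul_right]; ring

lemma Q1_bound :
    ∑' q : (ℤ × ℤ) × (ℤ × ℤ), (bb c σ q.1 * bb c σ (q.1 + q.2)) * (bb c σ q.1 * bb c σ (q.1 + q.2))
      = (∑' ξ : ℤ × ℤ, bb c σ ξ * bb c σ ξ) * (∑' ξ : ℤ × ℤ, bb c σ ξ * bb c σ ξ) := by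
  rw [ENNReal.tsum_prod']
  calc ∑' j : ℤ × ℤ, ∑' k : ℤ × ℤ, (bb c σ j * bb c σ (j + k)) * (bb c σ j * bb c σ (j + k))
      = ∑' j : ℤ × ℤ, (bb c σ j * bb c σ j) * ∑' k : ℤ × ℤ, bb c σ (j + k) * bb c σ (j + k) := by
        apply tsum_congr; intro j
        rw [← ENNReal.tsum_mul_left]
        apply tsum_congr; intro k; ring
  _ = ∑' j : ℤ × ℤ, (bb c σ j * bb c σ j) * ∑' ξ : ℤ × ℤ, bb c σ ξ * bb c σ ξ := by
        apply tsum_congr; intro j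
        congr 1
        exact (Equiv.addLeft j).tsum_eq (fun i => bb c σ i * bb c σ i)
  _ = _ := ENNReal.tsum_mul_right

lemma Q2_bound :
    ∑' q : (ℤ × ℤ) × (ℤ × ℤ), (bb c σ q.2 * bb c σ (q.1 + q.2)) * (bb c σ q.2 * bb c σ (q.1 + q.2))
      = (∑' ξ : ℤ × ℤ, bb c σ ξ * bb c σ ξ) * (∑' ξ : ℤ × ℤ, bb c σ ξ * bb c σ ξ) := by
  rw [ENNReal.tsum_prod', ENNReal.tsum_comm]
  calc ∑' k : ℤ × ℤ, ∑' j : ℤ × ℤ, (bb c σ k * bb c σ (j + k)) * (bb c σ k * bb c σ (j + k))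
      = ∑' k : ℤ × ℤ, (bb c σ k * bb c σ k) * ∑' j : ℤ × ℤ, bb c σ (j + k) * bb c σ (j + k) := by
        apply tsum_congr; intro k
        rw [← ENNReal.tsum_mul_left]
        apply tsum_congr; intro j; ring
  _ = ∑' k : ℤ × ℤ, (bb c σ k * bb c σ k) * ∑' ξ : ℤ × ℤ, bb c σ ξ * bb c σ ξ := by
        apply tsum_congr; intro k
        congr 1
        exact (Equiv.addRight k).tsum_eq (fun i => bb c σ i * bb c σ i)
  _ = _ := ENNReal.tsum_mul_right


lemma step1 (hσ : 0 ≤ σ) (p : (ℤ × ℤ) × (ℤ × ℤ)) :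
    ENNReal.ofReal (‖c p.2‖ * ‖c (p.1 - p.2)‖ * |(p.2.1 : ℝ)| * ‖c p.1‖ *
        Real.exp (2 * σ * mag p.1))
      ≤ HH c σ (p.2, p.1 - p.2) := by
  obtain ⟨l, j⟩ := p
  simp only [HH]
  rw [show j + (l - j) = l by ring]
  apply ENNReal.ofReal_le_ofReal
  have hexp : Real.exp (2 * σ * mag l)
      ≤ Real.exp (σ * mag j) * Real.exp (σ * mag (l - j)) * Real.exp (σ * mag l) := by
    rw [← Real.exp_add, ← Real.exp_add]
    apply Real.exp_le_exp.2
    have ht : mag l ≤ mag j + mag (l - j) := by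
      have := mag_triangle j (l - j)
      rwa [show j + (l - j) = l by ring] at this
    nlinarith
  have h1 : |(j.1 : ℝ)| * Real.exp (2 * σ * mag l)
      ≤ mag j * (Real.exp (σ * mag j) * Real.exp (σ * mag (l - j)) * Real.exp (σ * mag l)) :=
    mul_le_mul (abs_fst_le j) hexp (Real.exp_pos _).le (mag_nonneg j)
  calc ‖c j‖ * ‖c (l - j)‖ * |(j.1 : ℝ)| * ‖c l‖ * Real.exp (2 * σ * mag l)
      = (|(j.1 : ℝ)| * Real.exp (2 * σ * mag l)) * (‖c j‖ * ‖c (l - j)‖ * ‖c l‖) := by ring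
  _ ≤ (mag j * (Real.exp (σ * mag j) * Real.exp (σ * mag (l - j)) * Real.exp (σ * mag l)))
        * (‖c j‖ * ‖c (l - j)‖ * ‖c l‖) := by
      apply mul_le_mul_of_nonneg_right h1 (by positivity)
  _ = mag j * eaR c σ j * eaR c σ (l - j) * eaR c σ l := by unfold eaR; ring

lemma step2a (hc0 : c 0 = 0) (q : (ℤ × ℤ) × (ℤ × ℤ)) :
    (if mag q.1 ≤ mag q.2 then HH c σ q else 0)
      ≤ (dd c σ q.2 * sqW q.2 q.1) * (bb c σ q.1 * bb c σ (q.1 + q.2)) := by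
  obtain ⟨j, k⟩ := q
  by_cases hreg : mag j ≤ mag k
  swap
  · rw [if_neg hreg]; exact zero_le
  rw [if_pos hreg]
  by_cases hj0 : j = 0
  · have : HH c σ (j, k) = 0 := by
      simp only [HH, hj0, mag_zero]
      simp
    rw [this]; exact zero_le
  by_cases hjk0 : j + k = 0
  · have : HH c σ (j, k) = 0 := by
      simp only [HH]
      have : eaR c σ (j + k) = 0 := by
        show Real.exp _ * ‖c (j+k)‖ = 0
        rw [hjk0, hc0]; simp
      simp [this]
    rw [this]; exact zero_le
  -- main case
  unfold sqW
  rw [if_pos ⟨hj0, hjk0, hreg⟩]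
  unfold HH dd bb
  have hsj : (0:ℝ) < Real.sqrt (mag j) := Real.sqrt_pos.2 (mag_pos hj0)
  have hsjk : (0:ℝ) < Real.sqrt (mag (j + k)) := Real.sqrt_pos.2 (mag_pos hjk0)
  rw [← ENNReal.ofReal_mul (mul_nonneg (mag_nonneg k) (eaR_nonneg k)),
    ← ENNReal.ofReal_mul (mul_nonneg (Real.sqrt_nonneg _) (eaR_nonneg j)),
    ← ENNReal.ofReal_mul (mul_nonneg (mul_nonneg (mag_nonneg k) (eaR_nonneg k))
      (mul_nonneg (inv_nonneg.2 (Real.sqrt_nonneg _)) (inv_nonneg.2 (Real.sqrt_nonneg _))))]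
  apply ENNReal.ofReal_le_ofReal
  have i1 : (Real.sqrt (mag j))⁻¹ * Real.sqrt (mag j) = 1 := inv_mul_cancel₀ hsj.ne'
  have i2 : (Real.sqrt (mag (j+k)))⁻¹ * Real.sqrt (mag (j+k)) = 1 := inv_mul_cancel₀ hsjk.ne'
  have hR : mag k * eaR c σ k * ((Real.sqrt (mag j))⁻¹ * (Real.sqrt (mag (j + k)))⁻¹)
        * (Real.sqrt (mag j) * eaR c σ j * (Real.sqrt (mag (j + k)) * eaR c σ (j + k)))
      = (mag k * (eaR c σ j * eaR c σ k * eaR c σ (j + k)))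
        * (((Real.sqrt (mag j))⁻¹ * Real.sqrt (mag j))
          * ((Real.sqrt (mag (j+k)))⁻¹ * Real.sqrt (mag (j+k)))) := by ring
  rw [hR, i1, i2, mul_one, mul_one]
  have hP : 0 ≤ eaR c σ j * eaR c σ k * eaR c σ (j + k) :=
    mul_nonneg (mul_nonneg (eaR_nonneg j) (eaR_nonneg k)) (eaR_nonneg _)
  calc mag j * eaR c σ j * eaR c σ k * eaR c σ (j + k)
      = mag j * (eaR c σ j * eaR c σ k * eaR c σ (j + k)) := by ring
  _ ≤ mag k * (eaR c σ j * eaR c σ k * eaR c σ (j + k)) :=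
      mul_le_mul_of_nonneg_right hreg hP

lemma step2b (hc0 : c 0 = 0) (q : (ℤ × ℤ) × (ℤ × ℤ)) :
    (if mag q.1 ≤ mag q.2 then 0 else HH c σ q)
      ≤ (dd c σ q.1 * sqW q.1 q.2) * (bb c σ q.2 * bb c σ (q.1 + q.2)) := by
  obtain ⟨j, k⟩ := q
  by_cases hreg : mag j ≤ mag k
  · rw [if_pos hreg]; exact zero_le
  rw [if_neg hreg]
  push_neg at hreg
  have hreg' : mag k ≤ mag j := hreg.le
  by_cases hk0 : k = 0
  · have : HH c σ (j, k) = 0 := by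
      have : eaR c σ k = 0 := by
        show Real.exp _ * ‖c k‖ = 0
        rw [hk0, hc0]; simp
      simp [HH, this]
    rw [this]; exact zero_le
  by_cases hjk0 : j + k = 0
  · have : HH c σ (j, k) = 0 := by
      have : eaR c σ (j + k) = 0 := by
        show Real.exp _ * ‖c (j+k)‖ = 0
        rw [hjk0, hc0]; simp
      simp [HH, this]
    rw [this]; exact zero_le
  have hkj0 : k + j ≠ 0 := by rwa [add_comm k j]
  unfold sqW
  rw [if_pos ⟨hk0, hkj0, hreg'⟩]
  rw [show k + j = j + k from add_comm k j]
  unfold HH dd bb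
  have hsk : (0:ℝ) < Real.sqrt (mag k) := Real.sqrt_pos.2 (mag_pos hk0)
  have hsjk : (0:ℝ) < Real.sqrt (mag (j + k)) := Real.sqrt_pos.2 (mag_pos hjk0)
  rw [← ENNReal.ofReal_mul (mul_nonneg (mag_nonneg j) (eaR_nonneg j)),
    ← ENNReal.ofReal_mul (mul_nonneg (Real.sqrt_nonneg _) (eaR_nonneg k)),
    ← ENNReal.ofReal_mul (mul_nonneg (mul_nonneg (mag_nonneg j) (eaR_nonneg j))
      (mul_nonneg (inv_nonneg.2 (Real.sqrt_nonneg _)) (inv_nonneg.2 (Real.sqrt_nonneg _))))]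
  apply ENNReal.ofReal_le_ofReal
  have i1 : (Real.sqrt (mag k))⁻¹ * Real.sqrt (mag k) = 1 := inv_mul_cancel₀ hsk.ne'
  have i2 : (Real.sqrt (mag (j+k)))⁻¹ * Real.sqrt (mag (j+k)) = 1 := inv_mul_cancel₀ hsjk.ne'
  have hR : mag j * eaR c σ j * ((Real.sqrt (mag k))⁻¹ * (Real.sqrt (mag (j + k)))⁻¹)
        * (Real.sqrt (mag k) * eaR c σ k * (Real.sqrt (mag (j + k)) * eaR c σ (j + k)))
      = (mag j * eaR c σ j * eaR c σ k * eaR c σ (j + k))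
        * (((Real.sqrt (mag k))⁻¹ * Real.sqrt (mag k))
          * ((Real.sqrt (mag (j+k)))⁻¹ * Real.sqrt (mag (j+k)))) := by ring
  rw [hR, i1, i2, mul_one, mul_one]


lemma half_pow (x : ℝ≥0∞) : (x * x) ^ (1/2 : ℝ) = x := by
  rw [← pow_two, ← ENNReal.rpow_natCast x 2, ← ENNReal.rpow_mul]
  norm_num

lemma main_aux (hσ : 0 ≤ σ) (hc0 : c 0 = 0)
    (h4 : Summable fun p : (ℤ × ℤ) × (ℤ × ℤ) =>
      ‖c p.2‖ * ‖c (p.1 - p.2)‖ * |(p.2.1 : ℝ)| * ‖c p.1‖ * Real.exp (2 * σ * mag p.1))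
    (h5 : Summable fun ξ : ℤ × ℤ => Real.exp (2 * σ * mag ξ) * (mag ξ) ^ 2 * ‖c ξ‖ ^ 2)
    (h6 : Summable fun ξ : ℤ × ℤ => Real.exp (2 * σ * mag ξ) * mag ξ * ‖c ξ‖ ^ 2) :
    ∑' p : (ℤ × ℤ) × (ℤ × ℤ),
        (‖c p.2‖ * ‖c (p.1 - p.2)‖ * |(p.2.1 : ℝ)| * ‖c p.1‖ * Real.exp (2 * σ * mag p.1))
      ≤ 13 * Real.sqrt (∑' ξ : ℤ × ℤ, Real.exp (2 * σ * mag ξ) * (mag ξ) ^ 2 * ‖c ξ‖ ^ 2)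
          * (∑' ξ : ℤ × ℤ, Real.exp (2 * σ * mag ξ) * mag ξ * ‖c ξ‖ ^ 2) := by
  set S5 := ∑' ξ : ℤ × ℤ, Real.exp (2 * σ * mag ξ) * (mag ξ) ^ 2 * ‖c ξ‖ ^ 2 with hS5
  set S6 := ∑' ξ : ℤ × ℤ, Real.exp (2 * σ * mag ξ) * mag ξ * ‖c ξ‖ ^ 2 with hS6
  have hS5nn : 0 ≤ S5 := tsum_nonneg (fun ξ => by positivity)
  have hS6nn : 0 ≤ S6 := tsum_nonneg (fun ξ =>
    mul_nonneg (mul_nonneg (Real.exp_pos _).le (mag_nonneg ξ)) (sq_nonneg _))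
  -- identify A2 and B
  have hexp2 : ∀ ξ : ℤ × ℤ, Real.exp (2 * σ * mag ξ)
      = Real.exp (σ * mag ξ) * Real.exp (σ * mag ξ) := by
    intro ξ; rw [← Real.exp_add]; ring_nf
  have hA2 : (∑' ξ : ℤ × ℤ, dd c σ ξ * dd c σ ξ) = ENNReal.ofReal S5 := by
    rw [hS5, ENNReal.ofReal_tsum_of_nonneg (fun ξ => by positivity) h5]
    apply tsum_congr; intro ξ
    unfold dd eaR
    rw [← ENNReal.ofReal_mul (mul_nonneg (mag_nonneg ξ) (by positivity))]
    congr 1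
    rw [hexp2]; ring
  have hB : (∑' ξ : ℤ × ℤ, bb c σ ξ * bb c σ ξ) = ENNReal.ofReal S6 := by
    rw [hS6, ENNReal.ofReal_tsum_of_nonneg (fun ξ =>
      mul_nonneg (mul_nonneg (Real.exp_pos _).le (mag_nonneg ξ)) (sq_nonneg _)) h6]
    apply tsum_congr; intro ξ
    unfold bb eaR
    rw [← ENNReal.ofReal_mul (mul_nonneg (Real.sqrt_nonneg _) (by positivity))]
    congr 1
    rw [hexp2]
    have h7 : Real.sqrt (mag ξ) * Real.sqrt (mag ξ) = mag ξ := Real.mul_self_sqrt (mag_nonneg ξ)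
    linear_combination (Real.exp (σ * mag ξ) * Real.exp (σ * mag ξ) * ‖c ξ‖^2) * h7
  -- the ENNReal chain
  have chain : ∑' p : (ℤ × ℤ) × (ℤ × ℤ), ENNReal.ofReal
      (‖c p.2‖ * ‖c (p.1 - p.2)‖ * |(p.2.1 : ℝ)| * ‖c p.1‖ * Real.exp (2 * σ * mag p.1))
      ≤ ENNReal.ofReal (13 * Real.sqrt S5 * S6) := by
    calc (∑' p : (ℤ × ℤ) × (ℤ × ℤ), ENNReal.ofReal
        (‖c p.2‖ * ‖c (p.1 - p.2)‖ * |(p.2.1 : ℝ)| * ‖c p.1‖ * Real.exp (2 * σ * mag p.1)))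
        ≤ ∑' p : (ℤ × ℤ) × (ℤ × ℤ), HH c σ (p.2, p.1 - p.2) :=
          ENNReal.tsum_le_tsum (step1 hσ)
    _ = ∑' q : (ℤ × ℤ) × (ℤ × ℤ), HH c σ q :=
        Equiv.tsum_eq ⟨fun p => (p.2, p.1 - p.2), fun q => (q.1 + q.2, q.1),
          fun p => by simp, fun q => by simp⟩ (HH c σ)
    _ = ∑' q : (ℤ × ℤ) × (ℤ × ℤ),
          ((if mag q.1 ≤ mag q.2 then HH c σ q else 0)
            + (if mag q.1 ≤ mag q.2 then 0 else HH c σ q)) := by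
        apply tsum_congr; intro q; split_ifs <;> simp
    _ = (∑' q : (ℤ × ℤ) × (ℤ × ℤ), (if mag q.1 ≤ mag q.2 then HH c σ q else 0))
          + (∑' q : (ℤ × ℤ) × (ℤ × ℤ), (if mag q.1 ≤ mag q.2 then 0 else HH c σ q)) :=
        ENNReal.tsum_add
    _ ≤ (∑' q : (ℤ × ℤ) × (ℤ × ℤ),
            (dd c σ q.2 * sqW q.2 q.1) * (bb c σ q.1 * bb c σ (q.1 + q.2)))
          + (∑' q : (ℤ × ℤ) × (ℤ × ℤ),
            (dd c σ q.1 * sqW q.1 q.2) * (bb c σ q.2 * bb c σ (q.1 + q.2))) := by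
        gcongr with q q
        · exact step2a hc0 q
        · exact step2b hc0 q
    _ ≤ ((∑' q : (ℤ × ℤ) × (ℤ × ℤ),
            (dd c σ q.2 * sqW q.2 q.1) * (dd c σ q.2 * sqW q.2 q.1)) ^ (1/2:ℝ)
          * (∑' q : (ℤ × ℤ) × (ℤ × ℤ),
            (bb c σ q.1 * bb c σ (q.1 + q.2)) * (bb c σ q.1 * bb c σ (q.1 + q.2))) ^ (1/2:ℝ))
        + ((∑' q : (ℤ × ℤ) × (ℤ × ℤ),
            (dd c σ q.1 * sqW q.1 q.2) * (dd c σ q.1 * sqW q.1 q.2)) ^ (1/2:ℝ)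
          * (∑' q : (ℤ × ℤ) × (ℤ × ℤ),
            (bb c σ q.2 * bb c σ (q.1 + q.2)) * (bb c σ q.2 * bb c σ (q.1 + q.2))) ^ (1/2:ℝ)) := by
        gcongr
        · exact tsum_CS _ _
        · exact tsum_CS _ _
    _ ≤ ((ENNReal.ofReal 40 * ENNReal.ofReal S5) ^ (1/2:ℝ)
            * ((ENNReal.ofReal S6) * (ENNReal.ofReal S6)) ^ (1/2:ℝ))
        + ((ENNReal.ofReal 40 * ENNReal.ofReal S5) ^ (1/2:ℝ)
            * ((ENNReal.ofReal S6) * (ENNReal.ofReal S6)) ^ (1/2:ℝ)) := by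
        gcongr
        · rw [← hA2]; exact P1_bound
        · rw [← hB, ← Q1_bound]
        · rw [← hA2]; exact P2_bound
        · rw [← hB, ← Q2_bound]
    _ = ENNReal.ofReal (Real.sqrt 40 * Real.sqrt S5 * S6)
          + ENNReal.ofReal (Real.sqrt 40 * Real.sqrt S5 * S6) := by
        have h40 : (ENNReal.ofReal 40 * ENNReal.ofReal S5) ^ (1/2:ℝ)
            = ENNReal.ofReal (Real.sqrt 40) * ENNReal.ofReal (Real.sqrt S5) := by
          rw [ENNReal.mul_rpow_of_nonneg _ _ (by norm_num),
            ENNReal.ofReal_rpow_of_nonneg (by norm_num : (0:ℝ) ≤ 40) (by norm_num),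
            ENNReal.ofReal_rpow_of_nonneg hS5nn (by norm_num),
            ← Real.sqrt_eq_rpow, ← Real.sqrt_eq_rpow]
        rw [h40, half_pow,
          ← ENNReal.ofReal_mul (Real.sqrt_nonneg _),
          ← ENNReal.ofReal_mul (mul_nonneg (Real.sqrt_nonneg _) (Real.sqrt_nonneg _))]
    _ ≤ ENNReal.ofReal (13 * Real.sqrt S5 * S6) := by
        have hnn : 0 ≤ Real.sqrt 40 * Real.sqrt S5 * S6 :=
          mul_nonneg (mul_nonneg (Real.sqrt_nonneg _) (Real.sqrt_nonneg _)) hS6nn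
        rw [← ENNReal.ofReal_add hnn hnn]
        apply ENNReal.ofReal_le_ofReal
        have h13 : Real.sqrt 40 ≤ 6.5 := by
          rw [show (6.5:ℝ) = Real.sqrt (6.5^2) from (Real.sqrt_sq (by norm_num)).symm]
          exact Real.sqrt_le_sqrt (by norm_num)
        nlinarith [Real.sqrt_nonneg S5, hS6nn, mul_nonneg (Real.sqrt_nonneg S5) hS6nn]
  -- back to the reals
  have hof : ENNReal.ofReal (∑' p : (ℤ × ℤ) × (ℤ × ℤ),
      (‖c p.2‖ * ‖c (p.1 - p.2)‖ * |(p.2.1 : ℝ)| * ‖c p.1‖ * Real.exp (2 * σ * mag p.1)))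
      = ∑' p : (ℤ × ℤ) × (ℤ × ℤ), ENNReal.ofReal
      (‖c p.2‖ * ‖c (p.1 - p.2)‖ * |(p.2.1 : ℝ)| * ‖c p.1‖ * Real.exp (2 * σ * mag p.1)) :=
    ENNReal.ofReal_tsum_of_nonneg (fun p => by positivity) h4
  rw [← hof] at chain
  exact (ENNReal.ofReal_le_ofReal_iff
    (mul_nonneg (mul_nonneg (by norm_num) (Real.sqrt_nonneg _)) hS6nn)).1 chain

end Aux

/-- Estimate for the nonlinear term in the Gevrey inner product:
`|⟨ηη_x, η⟩_σ| ≤ c ‖Λη‖_σ ‖Λ^{1/2}η‖_σ²`, stated via the Fourier coefficients `c` of a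
real-valued zero-mean `η`, where
`⟨ηη_x,η⟩_σ = (2π)² i Σ_ℓ Σ_j c(j) c(ℓ-j) j₁ conj(c(ℓ)) e^{2σ|ℓ|}`. -/
theorem stmt_3 :
    ∃ C : ℝ, 0 < C ∧ ∀ (c : ℤ × ℤ → ℂ) (σ : ℝ), 0 ≤ σ →
      c (0, 0) = 0 →
      (∀ ξ : ℤ × ℤ, c (-ξ.1, -ξ.2) = starRingEnd ℂ (c ξ)) →
      (Summable fun p : (ℤ × ℤ) × (ℤ × ℤ) =>
        ‖c p.2‖ * ‖c (p.1 - p.2)‖ * |(p.2.1 : ℝ)| * ‖c p.1‖ * Real.exp (2 * σ * mag p.1)) →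
      (Summable fun ξ : ℤ × ℤ => Real.exp (2 * σ * mag ξ) * (mag ξ) ^ 2 * ‖c ξ‖ ^ 2) →
      (Summable fun ξ : ℤ × ℤ => Real.exp (2 * σ * mag ξ) * mag ξ * ‖c ξ‖ ^ 2) →
      ‖(2 * (π : ℂ)) ^ 2 * Complex.I *
          ∑' ℓ : ℤ × ℤ, (∑' j : ℤ × ℤ, c j * c (ℓ - j) * (j.1 : ℂ)) *
            (starRingEnd ℂ) (c ℓ) * (Real.exp (2 * σ * mag ℓ) : ℂ)‖
        ≤ C * Real.sqrt (∑' ξ : ℤ × ℤ, Real.exp (2 * σ * mag ξ) * (mag ξ) ^ 2 * ‖c ξ‖ ^ 2) *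
            (∑' ξ : ℤ × ℤ, Real.exp (2 * σ * mag ξ) * mag ξ * ‖c ξ‖ ^ 2) := by
  refine ⟨52 * π ^ 2, by positivity, ?_⟩
  intro c σ hσ hc0 _hreal h4 h5 h6
  have hc0' : c 0 = 0 := hc0
  set τ : ℤ × ℤ → ℂ := fun ℓ => (∑' j : ℤ × ℤ, c j * c (ℓ - j) * (j.1 : ℂ)) *
      (starRingEnd ℂ) (c ℓ) * (Real.exp (2 * σ * mag ℓ) : ℂ) with hτ
  set F : (ℤ × ℤ) × (ℤ × ℤ) → ℝ := fun p =>
      ‖c p.2‖ * ‖c (p.1 - p.2)‖ * |(p.2.1 : ℝ)| * ‖c p.1‖ * Real.exp (2 * σ * mag p.1) with hF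
  have hFnn : ∀ p, 0 ≤ F p := fun p => by rw [hF]; positivity
  have hfiber : ∀ ℓ, Summable fun j => F (ℓ, j) :=
    ((summable_prod_of_nonneg hFnn).1 h4).1
  have houter : Summable fun ℓ => ∑' j, F (ℓ, j) :=
    ((summable_prod_of_nonneg hFnn).1 h4).2
  -- per-ℓ estimate
  have hnorm_τ : ∀ ℓ : ℤ × ℤ, ‖τ ℓ‖ ≤ ∑' j, F (ℓ, j) := by
    intro ℓ
    by_cases hcl : c ℓ = 0
    · rw [hτ]
      simp only [hcl, map_zero, mul_zero, zero_mul, norm_zero]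
      exact tsum_nonneg fun j => hFnn (ℓ, j)
    · have hK : (0:ℝ) < ‖c ℓ‖ * Real.exp (2 * σ * mag ℓ) :=
        mul_pos (norm_pos_iff.2 hcl) (Real.exp_pos _)
      have hnormeq : ∀ j : ℤ × ℤ, ‖c j * c (ℓ - j) * (j.1 : ℂ)‖
          = ‖c j‖ * ‖c (ℓ - j)‖ * |(j.1 : ℝ)| := by
        intro j
        rw [norm_mul, norm_mul]
        congr 1
        rw [show ((j.1 : ℤ) : ℂ) = (((j.1 : ℤ) : ℝ) : ℂ) by push_cast; ring,
          Complex.norm_real, Real.norm_eq_abs]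
      have hin : Summable fun j : ℤ × ℤ => ‖c j * c (ℓ - j) * (j.1 : ℂ)‖ := by
        rw [show (fun j : ℤ × ℤ => ‖c j * c (ℓ - j) * (j.1 : ℂ)‖)
            = fun j => ‖c j‖ * ‖c (ℓ - j)‖ * |(j.1 : ℝ)| from funext hnormeq]
        apply (summable_mul_right_iff hK.ne').1
        have : (fun j : ℤ × ℤ => ‖c j‖ * ‖c (ℓ - j)‖ * |(j.1 : ℝ)|
            * (‖c ℓ‖ * Real.exp (2 * σ * mag ℓ))) = fun j => F (ℓ, j) := by
          funext j; rw [hF]; ring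
        rw [this]
        exact hfiber ℓ
      calc ‖τ ℓ‖ = ‖∑' j : ℤ × ℤ, c j * c (ℓ - j) * (j.1 : ℂ)‖
            * (‖c ℓ‖ * Real.exp (2 * σ * mag ℓ)) := by
              rw [hτ]
              simp only [norm_mul, RCLike.norm_conj, Complex.norm_real,
                Real.norm_eq_abs, abs_of_pos (Real.exp_pos _)]
              ring
      _ ≤ (∑' j : ℤ × ℤ, ‖c j * c (ℓ - j) * (j.1 : ℂ)‖)
            * (‖c ℓ‖ * Real.exp (2 * σ * mag ℓ)) :=
          mul_le_mul_of_nonneg_right (norm_tsum_le_tsum_norm hin) hK.le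
      _ = ∑' j, F (ℓ, j) := by
          rw [← _root_.tsum_mul_right]
          apply tsum_congr; intro j
          rw [hnormeq j, hF]; ring
  have hsumτ : Summable fun ℓ => ‖τ ℓ‖ :=
    Summable.of_nonneg_of_le (fun _ => norm_nonneg _) hnorm_τ houter
  have hmain := main_aux hσ hc0' h4 h5 h6
  have hnorm : ‖(2 * (π : ℂ)) ^ 2 * Complex.I * ∑' ℓ, τ ℓ‖
      = (2 * π) ^ 2 * ‖∑' ℓ, τ ℓ‖ := by
    rw [norm_mul, norm_mul, norm_pow, Complex.norm_I, mul_one, norm_mul]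
    simp [Complex.norm_real, abs_of_pos Real.pi_pos]
  calc ‖(2 * (π : ℂ)) ^ 2 * Complex.I * ∑' ℓ, τ ℓ‖ = (2 * π) ^ 2 * ‖∑' ℓ, τ ℓ‖ := hnorm
  _ ≤ (2 * π) ^ 2 * ∑' ℓ, ∑' j, F (ℓ, j) := by
      apply mul_le_mul_of_nonneg_left _ (by positivity)
      exact (norm_tsum_le_tsum_norm hsumτ).trans (Summable.tsum_le_tsum hnorm_τ hsumτ houter)
  _ = (2 * π) ^ 2 * ∑' p : (ℤ × ℤ) × (ℤ × ℤ), F p := by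
      rw [Summable.tsum_prod' h4 hfiber]
  _ ≤ (2 * π) ^ 2 * (13 * Real.sqrt (∑' ξ : ℤ × ℤ,
        Real.exp (2 * σ * mag ξ) * (mag ξ) ^ 2 * ‖c ξ‖ ^ 2)
        * (∑' ξ : ℤ × ℤ, Real.exp (2 * σ * mag ξ) * mag ξ * ‖c ξ‖ ^ 2)) := by
      apply mul_le_mul_of_nonneg_left hmain (by positivity)
  _ = 52 * π ^ 2 * Real.sqrt (∑' ξ : ℤ × ℤ,
        Real.exp (2 * σ * mag ξ) * (mag ξ) ^ 2 * ‖c ξ‖ ^ 2)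
        * (∑' ξ : ℤ × ℤ, Real.exp (2 * σ * mag ξ) * mag ξ * ‖c ξ‖ ^ 2) := by ring
end
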